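/- arXiv:2506.06848 — 4 statements merged into one kernel-verified Lean document; each statement's English description precedes it below -/
import Mathlib

section
/- For every experiment (S, p_L, p_H), prior ρ ∈ (0,1), reservation value c ∈ (0,1), and integer n ≥ 1, there exists an equilibrium strategy: a function σ* : S → [0,1] such that, with ψ* = Ψ(σ*), for every s ∈ S, Q_{ψ*}(s) > c implies σ*(s) = 1 and Q_{ψ*}(s) < c implies σ*(s) = 0. -/
/-!
Restrict to the one-parameter family of threshold strategies `σ_t`, `t ∈ [0, m]`. Along it the
interim belief, hence every posterior `Q_t(s)`, is continuous in `t`, and by monotone likelihood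
ratios `Q_t(s)` is nondecreasing in `s`. The counts `a(t) = #{s | c < Q_t(s)}` and
`b(t) = #{s | c ≤ Q_t(s)}` are lower and upper semicontinuous, so `T = sup {t | t ≤ a(t)}`
satisfies `a(T) ≤ T ≤ b(T)`; since posteriors are monotone in `s`, this says exactly that `σ_T`
accepts every signal with posterior above `c` and rejects every signal with posterior below `c`.
-/

open Finset Filter Topology

noncomputable section

/-- Probability that a single buyer rejects the seller, given conditional signal
distribution `p` and strategy `σ`: `r_θ(σ) = 1 - Σ_s p_θ(s)·σ(s)`. -/
def rej {m : ℕ} (p σ : Fin m → ℝ) : ℝ := 1 - ∑ s, p s * σ s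

/-- `ν_θ(σ) = (1/n)·Σ_{k=0}^{n-1} r_θ(σ)^k`: probability of being visited. -/
def visit (n : ℕ) {m : ℕ} (p σ : Fin m → ℝ) : ℝ :=
  (1 / (n : ℝ)) * ∑ k ∈ Finset.range n, rej p σ ^ k

/-- Interim belief `Ψ(σ) = ρ·ν_H(σ) / (ρ·ν_H(σ) + (1-ρ)·ν_L(σ))`. -/
def interim (ρ : ℝ) (n : ℕ) {m : ℕ} (pL pH σ : Fin m → ℝ) : ℝ :=
  ρ * visit n pH σ / (ρ * visit n pH σ + (1 - ρ) * visit n pL σ)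

/-- Posterior belief `Q_ψ(s) = ψ·p_H(s) / (ψ·p_H(s) + (1-ψ)·p_L(s))`. -/
def post {m : ℕ} (ψ : ℝ) (pL pH : Fin m → ℝ) (s : Fin m) : ℝ :=
  ψ * pH s / (ψ * pH s + (1 - ψ) * pL s)

/-- A strategy maps each signal to an acceptance probability in `[0,1]`. -/
def IsStrategy {m : ℕ} (σ : Fin m → ℝ) : Prop := ∀ s, 0 ≤ σ s ∧ σ s ≤ 1

/-- `σ` is an equilibrium strategy: with `ψ* = Ψ(σ)`, accept for sure when the
posterior exceeds `c`, reject for sure when it falls below `c`. -/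
def IsEquilibrium (ρ c : ℝ) (n : ℕ) {m : ℕ} (pL pH σ : Fin m → ℝ) : Prop :=
  IsStrategy σ ∧
  ∀ s : Fin m,
    (c < post (interim ρ n pL pH σ) pL pH s → σ s = 1) ∧
    (post (interim ρ n pL pH σ) pL pH s < c → σ s = 0)

/-- Total surplus `Π(σ) = (1-c)·ρ·(1-r_H(σ)^n) - c·(1-ρ)·(1-r_L(σ)^n)`. -/
def surplus (ρ c : ℝ) (n : ℕ) {m : ℕ} (pL pH σ : Fin m → ℝ) : ℝ :=
  (1 - c) * ρ * (1 - rej pH σ ^ n) - c * (1 - ρ) * (1 - rej pL σ ^ n)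

/-- The most selective equilibrium strategy. -/
def MostSelective (ρ c : ℝ) (n : ℕ) {m : ℕ} (pL pH σ : Fin m → ℝ) : Prop :=
  IsEquilibrium ρ c n pL pH σ ∧
  ∀ σ' : Fin m → ℝ, IsEquilibrium ρ c n pL pH σ' → ∀ s, σ s ≤ σ' s

/-- The least selective equilibrium strategy. -/
def LeastSelective (ρ c : ℝ) (n : ℕ) {m : ℕ} (pL pH σ : Fin m → ℝ) : Prop :=
  IsEquilibrium ρ c n pL pH σ ∧
  ∀ σ' : Fin m → ℝ, IsEquilibrium ρ c n pL pH σ' → ∀ s, σ' s ≤ σ s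

/-- An experiment: `p_L, p_H` are probability mass functions with full joint support,
indexed so that likelihood ratios are nondecreasing. -/
def IsExperiment {m : ℕ} (pL pH : Fin m → ℝ) : Prop :=
  (∀ s, 0 ≤ pL s) ∧ (∀ s, 0 ≤ pH s) ∧
  (∑ s, pL s = 1) ∧ (∑ s, pH s = 1) ∧
  (∀ s, 0 < pL s + pH s) ∧
  (∀ i j : Fin m, i ≤ j → pH i * pL j ≤ pH j * pL i)

/-- A strategy is monotone: a positive acceptance probability at `s_i` forces sure
acceptance at every signal with strictly higher likelihood ratio. -/
def MonotoneStrategy {m : ℕ} (pL pH σ : Fin m → ℝ) : Prop :=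
  ∀ i j : Fin m, 0 < σ i → pH i * pL j < pH j * pL i → σ j = 1

theorem exists_le_self_le_of_semicontinuous {a b : ℝ → ℝ} (ha : LowerSemicontinuous a)
    (hb : UpperSemicontinuous b) (hab : a ≤ b) {t₀ : ℝ} (ht₀ : t₀ ≤ a t₀)
    (hbdd : BddAbove (Set.range a)) : ∃ T, a T ≤ T ∧ T ≤ b T := by
  set S := {t | t ≤ a t}
  have hS : BddAbove S := by
    obtain ⟨M, hM⟩ := hbdd
    exact ⟨M, fun t ht => ht.trans (hM ⟨t, rfl⟩)⟩
  set T := sSup S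
  refine ⟨T, ?_, ?_⟩
  · by_contra! h
    obtain ⟨δ, hδ, hnear⟩ := Metric.eventually_nhds_iff.1 (ha T ((T + a T) / 2) (by linarith))
    set t := T + min (δ / 2) ((a T - T) / 2)
    have hmin₁ : 0 < min (δ / 2) ((a T - T) / 2) := lt_min (by linarith) (by linarith)
    have hmin₂ := min_le_left (δ / 2) ((a T - T) / 2)
    have hmin₃ := min_le_right (δ / 2) ((a T - T) / 2)
    have hdist : dist t T < δ := by
      rw [Real.dist_eq, abs_lt]; constructor <;> linarith
    have htS : t ∈ S := by
      change t ≤ a t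
      linarith [hnear hdist]
    linarith [le_csSup hS htS]
  · by_contra! h
    obtain ⟨δ, hδ, hnear⟩ := Metric.eventually_nhds_iff.1 (hb T ((T + b T) / 2) (by linarith))
    obtain ⟨t, htS, hlt⟩ := exists_lt_of_lt_csSup ⟨t₀, ht₀⟩
      (max_lt (show (T + b T) / 2 < T by linarith) (show T - δ < T by linarith))
    rw [max_lt_iff] at hlt
    have htT : t ≤ T := le_csSup hS htS
    have hdist : dist t T < δ := by
      rw [Real.dist_eq, abs_lt]; constructor <;> linarith
    have : t ≤ b t := htS.trans (hab t)
    linarith [hnear hdist]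

section Counting

variable {X ι : Type*} [TopologicalSpace X] (s : Finset ι) {f : X → ι → ℝ}

theorem lowerSemicontinuous_card_filter_lt (hf : ∀ i, Continuous fun x => f x i) (c : ℝ) :
    LowerSemicontinuous fun x => (#{i ∈ s | c < f x i} : ℝ) := by
  simp_rw [natCast_card_filter]
  refine lowerSemicontinuous_sum fun i _ => ?_
  have h : (fun x => if c < f x i then (1 : ℝ) else 0) = {x | c < f x i}.indicator 1 := by
    ext x
    simp [Set.indicator_apply]
  exact h ▸ (isOpen_lt continuous_const (hf i)).lowerSemicontinuous_indicator zero_le_one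

theorem upperSemicontinuous_card_filter_le (hf : ∀ i, Continuous fun x => f x i) (c : ℝ) :
    UpperSemicontinuous fun x => (#{i ∈ s | c ≤ f x i} : ℝ) := by
  simp_rw [natCast_card_filter]
  refine upperSemicontinuous_sum fun i _ => ?_
  have h : (fun x => if c ≤ f x i then (1 : ℝ) else 0) = {x | c ≤ f x i}.indicator 1 := by
    ext x
    simp [Set.indicator_apply]
  exact h ▸ (isClosed_le continuous_const (hf i)).upperSemicontinuous_indicator zero_le_one

end Counting

section Experiment

variable {m : ℕ} {pL pH : Fin m → ℝ}

theorem rej_nonneg {p σ : Fin m → ℝ} (hp : ∀ s, 0 ≤ p s) (hp₁ : ∑ s, p s = 1)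
    (hσ : IsStrategy σ) : 0 ≤ rej p σ := by
  have : ∑ s, p s * σ s ≤ ∑ s, p s :=
    sum_le_sum fun s _ => mul_le_of_le_one_right (hp s) (hσ s).2
  unfold rej
  linarith

theorem visit_pos {n : ℕ} (hn : 0 < n) {p σ : Fin m → ℝ} (hp : ∀ s, 0 ≤ p s)
    (hp₁ : ∑ s, p s = 1) (hσ : IsStrategy σ) : 0 < visit n p σ :=
  mul_pos (by positivity) <|
    sum_pos' (fun k _ => pow_nonneg (rej_nonneg hp hp₁ hσ) k) ⟨0, mem_range.2 hn, by simp⟩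

variable {ρ : ℝ} {n : ℕ}

theorem interim_weights_pos (hρ : ρ ∈ Set.Ioo (0 : ℝ) 1) (hn : 0 < n)
    (hE : IsExperiment pL pH) {σ : Fin m → ℝ} (hσ : IsStrategy σ) :
    0 < ρ * visit n pH σ ∧ 0 < (1 - ρ) * visit n pL σ := by
  obtain ⟨hL, hH, hL₁, hH₁, -, -⟩ := hE
  exact ⟨mul_pos hρ.1 (visit_pos hn hH hH₁ hσ), mul_pos (sub_pos.2 hρ.2) (visit_pos hn hL hL₁ hσ)⟩

theorem interim_mem_Ioo (hρ : ρ ∈ Set.Ioo (0 : ℝ) 1) (hn : 0 < n) (hE : IsExperiment pL pH)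
    {σ : Fin m → ℝ} (hσ : IsStrategy σ) : interim ρ n pL pH σ ∈ Set.Ioo 0 1 := by
  obtain ⟨hH, hL⟩ := interim_weights_pos hρ hn hE hσ
  exact ⟨div_pos hH (by linarith), (div_lt_one (by linarith)).2 (by linarith)⟩

theorem continuousOn_interim (hρ : ρ ∈ Set.Ioo (0 : ℝ) 1) (hn : 0 < n)
    (hE : IsExperiment pL pH) : ContinuousOn (interim ρ n pL pH) {σ | IsStrategy σ} := by
  have hvisit : ∀ p : Fin m → ℝ, Continuous (visit n p) := fun p => by
    unfold visit rej
    fun_prop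
  refine ContinuousOn.div (by fun_prop) (by fun_prop) fun σ hσ => ?_
  obtain ⟨hH, hL⟩ := interim_weights_pos hρ hn hE hσ
  positivity

theorem post_denominator_pos {ψ : ℝ} (hψ : ψ ∈ Set.Ioo (0 : ℝ) 1) (hE : IsExperiment pL pH)
    (s : Fin m) : 0 < ψ * pH s + (1 - ψ) * pL s := by
  obtain ⟨hL, hH, -, -, hLH, -⟩ := hE
  obtain ⟨hψ₀, hψ₁⟩ := hψ
  nlinarith [mul_pos (mul_pos hψ₀ (sub_pos.2 hψ₁)) (hLH s), mul_nonneg (sq_nonneg ψ) (hH s),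
    mul_nonneg (sq_nonneg (1 - ψ)) (hL s)]

theorem continuousOn_post (hE : IsExperiment pL pH) (s : Fin m) :
    ContinuousOn (fun ψ => post ψ pL pH s) (Set.Ioo 0 1) :=
  ContinuousOn.div (by fun_prop) (by fun_prop) fun _ hψ => (post_denominator_pos hψ hE s).ne'

theorem monotone_post {ψ : ℝ} (hψ : ψ ∈ Set.Ioo (0 : ℝ) 1) (hE : IsExperiment pL pH) :
    Monotone (post ψ pL pH) := by
  intro i j hij
  have hMLR := hE.2.2.2.2.2 i j hij
  unfold post
  rw [div_le_div_iff₀ (post_denominator_pos hψ hE i) (post_denominator_pos hψ hE j)]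
  nlinarith [mul_le_mul_of_nonneg_left hMLR (mul_nonneg hψ.1.le (sub_pos.2 hψ.2).le)]

theorem continuous_post_interim {X : Type*} [TopologicalSpace X] (hρ : ρ ∈ Set.Ioo (0 : ℝ) 1)
    (hn : 0 < n) (hE : IsExperiment pL pH) {σ : X → Fin m → ℝ} (hσ : Continuous σ)
    (hσs : ∀ x, IsStrategy (σ x)) (s : Fin m) :
    Continuous fun x => post (interim ρ n pL pH (σ x)) pL pH s :=
  (continuousOn_post hE s).comp_continuous
    ((continuousOn_interim hρ hn hE).comp_continuous hσ hσs) fun x =>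
    interim_mem_Ioo hρ hn hE (hσs x)

end Experiment

/-- As `t` runs from `0` to `m`, signals are switched on one at a time from the highest likelihood
ratio down; the signal currently being switched on is accepted with probability `t - ⌊t⌋`. -/
def thresholdStrategy (m : ℕ) (t : ℝ) (i : Fin m) : ℝ :=
  min 1 (max 0 (t - ((m : ℝ) - 1 - (i : ℕ))))

section Threshold

variable {m : ℕ}

theorem isStrategy_thresholdStrategy (m : ℕ) (t : ℝ) : IsStrategy (thresholdStrategy m t) :=
  fun _ => ⟨le_min zero_le_one (le_max_left _ _), min_le_left _ _⟩

theorem continuous_thresholdStrategy (m : ℕ) : Continuous (thresholdStrategy m) := by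
  unfold thresholdStrategy
  fun_prop

theorem thresholdStrategy_eq_one {t : ℝ} {i : Fin m} (h : (m : ℝ) - (i : ℕ) ≤ t) :
    thresholdStrategy m t i = 1 := by
  unfold thresholdStrategy
  rw [max_eq_right (by linarith), min_eq_left (by linarith)]

theorem thresholdStrategy_eq_zero {t : ℝ} {i : Fin m} (h : t ≤ (m : ℝ) - 1 - (i : ℕ)) :
    thresholdStrategy m t i = 0 := by
  unfold thresholdStrategy
  rw [max_eq_left (by linarith), min_eq_right zero_le_one]

variable {q : Fin m → ℝ} {c : ℝ} {s : Fin m}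

theorem sub_le_card_filter_lt (hq : Monotone q) (hs : c < q s) : m - s ≤ #{j | c < q j} := by
  rw [← Fin.card_Ici]
  exact card_le_card fun j hj => mem_filter.2 ⟨mem_univ _, hs.trans_le (hq (mem_Ici.1 hj))⟩

theorem card_filter_le_le_sub (hq : Monotone q) (hs : q s < c) : #{j | c ≤ q j} ≤ m - 1 - s := by
  rw [← Fin.card_Ioi]
  exact card_le_card fun j hj =>
    mem_Ioi.2 (lt_of_not_ge fun hjs => ((mem_filter.1 hj).2.trans (hq hjs)).not_gt hs)

theorem thresholdStrategy_bestResponse (hq : Monotone q) {t : ℝ}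
    (ht₁ : (#{j | c < q j} : ℝ) ≤ t) (ht₂ : t ≤ #{j | c ≤ q j}) (s : Fin m) :
    (c < q s → thresholdStrategy m t s = 1) ∧ (q s < c → thresholdStrategy m t s = 0) := by
  constructor
  · intro hs
    have h : ((m - s : ℕ) : ℝ) ≤ #{j | c < q j} := by exact_mod_cast sub_le_card_filter_lt hq hs
    rw [Nat.cast_sub s.isLt.le] at h
    exact thresholdStrategy_eq_one (by linarith)
  · intro hs
    have h := card_filter_le_le_sub hq hs
    have h' : (#{j | c ≤ q j} : ℝ) + s + 1 ≤ m := by exact_mod_cast (by omega)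
    exact thresholdStrategy_eq_zero (by linarith)

end Threshold

theorem equilibrium_exists_general
    (ρ c : ℝ) (hρ : ρ ∈ Set.Ioo (0:ℝ) 1)
    (n : ℕ) (hn : 1 ≤ n) (m : ℕ)
    (pL pH : Fin m → ℝ) (hE : IsExperiment pL pH) :
    ∃ σ : Fin m → ℝ, IsEquilibrium ρ c n pL pH σ := by
  set Q : ℝ → Fin m → ℝ := fun t => post (interim ρ n pL pH (thresholdStrategy m t)) pL pH
  have hQ : ∀ s, Continuous fun t => Q t s := continuous_post_interim hρ hn hE
    (continuous_thresholdStrategy m) (isStrategy_thresholdStrategy m)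
  obtain ⟨T, hT₁, hT₂⟩ := exists_le_self_le_of_semicontinuous
    (lowerSemicontinuous_card_filter_lt univ hQ c) (upperSemicontinuous_card_filter_le univ hQ c)
    (fun t => Nat.cast_le.2 <| card_le_card <| monotone_filter_right univ fun _ _ h => h.le)
    (t₀ := 0) (Nat.cast_nonneg _)
    ⟨m, Set.forall_mem_range.2 fun t => by exact_mod_cast (card_filter_le _ _).trans (by simp)⟩
  exact ⟨thresholdStrategy m T, isStrategy_thresholdStrategy m T,
    thresholdStrategy_bestResponse
      (monotone_post (interim_mem_Ioo hρ hn hE (isStrategy_thresholdStrategy m T)) hE) hT₁ hT₂⟩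

/-- an equilibrium strategy exists for every experiment, prior, reservation
value, and number of buyers. -/
theorem equilibrium_exists
    (ρ c : ℝ) (hρ : ρ ∈ Set.Ioo (0:ℝ) 1) (hc : c ∈ Set.Ioo (0:ℝ) 1)
    (n : ℕ) (hn : 1 ≤ n) (m : ℕ) (hm : 1 ≤ m)
    (pL pH : Fin m → ℝ) (hE : IsExperiment pL pH) :
    ∃ σ : Fin m → ℝ, IsEquilibrium ρ c n pL pH σ :=
  equilibrium_exists_general ρ c hρ n hn m pL pH hE
end
end

section
/- All equilibria exhibit adverse selection: for every monotone strategy σ, the interim belief lies weakly below the prior, Ψ(σ) ≤ ρ. In particular, ψ* = Ψ(σ*) ≤ ρ for every equilibrium strategy σ* (equilibrium strategies being monotone). -/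
open Finset Filter Topology

noncomputable section

section Aux
variable {m : ℕ}

lemma sum_bounds (p σ : Fin m → ℝ) (hp : ∀ s, 0 ≤ p s) (hp1 : ∑ s, p s = 1)
    (hσ : ∀ s, 0 ≤ σ s ∧ σ s ≤ 1) :
    0 ≤ ∑ s, p s * σ s ∧ ∑ s, p s * σ s ≤ 1 := by
  constructor
  · exact Finset.sum_nonneg fun s _ => mul_nonneg (hp s) (hσ s).1
  · calc ∑ s, p s * σ s ≤ ∑ s, p s := by
          exact Finset.sum_le_sum fun s _ => by nlinarith [(hσ s).2, hp s, (hσ s).1]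
      _ = 1 := hp1

lemma visit_pos_s3 {n : ℕ} (hn : 1 ≤ n) (p σ : Fin m → ℝ) (hr : 0 ≤ (1 : ℝ) - ∑ s, p s * σ s) :
    0 < (1 / (n : ℝ)) * ∑ k ∈ Finset.range n, (1 - ∑ s, p s * σ s) ^ k := by
  have hn0 : (0:ℝ) < n := by exact_mod_cast hn
  apply mul_pos (by positivity)
  have h1 : (1:ℝ) ≤ ∑ k ∈ Finset.range n, (1 - ∑ s, p s * σ s) ^ k := by
    have := Finset.single_le_sum (f := fun k => (1 - ∑ s, p s * σ s) ^ k)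
      (fun k _ => pow_nonneg hr k) (Finset.mem_range.mpr (by omega) : 0 ∈ Finset.range n)
    simpa using this
  linarith

lemma key_sum (pL pH σ : Fin m → ℝ)
    (hL1 : ∑ s, pL s = 1) (hH1 : ∑ s, pH s = 1)
    (hσ : ∀ s, 0 ≤ σ s ∧ σ s ≤ 1)
    (hmono : ∀ i j : Fin m, 0 < σ i → pH i * pL j < pH j * pL i → σ j = 1)
    (hLR : ∀ i j : Fin m, i ≤ j → pH i * pL j ≤ pH j * pL i) :
    ∑ s, pL s * σ s ≤ ∑ s, pH s * σ s := by
  have hpair : ∀ i j : Fin m, i ≤ j → 0 ≤ (pH i * pL j - pH j * pL i) * (σ i - σ j) := by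
    intro i j hij
    rcases eq_or_lt_of_le (hLR i j hij) with h | h
    · rw [h]; simp
    · have hσij : σ i ≤ σ j := by
        rcases eq_or_lt_of_le (hσ i).1 with h0 | h0
        · rw [← h0]; exact (hσ j).1
        · rw [hmono i j h0 h]; exact (hσ i).2
      nlinarith [(hσ i).1, (hσ j).2]
  have hpair' : ∀ i j : Fin m, 0 ≤ (pH i * pL j - pH j * pL i) * (σ i - σ j) := by
    intro i j
    rcases le_total i j with h | h
    · exact hpair i j h
    · have := hpair j i h
      nlinarith [this]
  have hinner : ∀ i : Fin m, ∑ j, (pH i * pL j - pH j * pL i) * (σ i - σ j)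
      = pH i * σ i - pH i * (∑ s, pL s * σ s) - pL i * σ i + pL i * (∑ s, pH s * σ s) := by
    intro i
    have expand : ∀ j, (pH i * pL j - pH j * pL i) * (σ i - σ j)
        = pH i * σ i * pL j - pH i * (pL j * σ j) - pL i * σ i * pH j + pL i * (pH j * σ j) :=
      fun j => by ring
    rw [Finset.sum_congr rfl fun j _ => expand j]
    rw [Finset.sum_add_distrib, Finset.sum_sub_distrib, Finset.sum_sub_distrib,
       ← Finset.mul_sum, ← Finset.mul_sum, ← Finset.mul_sum, ← Finset.mul_sum, hL1, hH1]
    ring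
  have htotal : ∑ i, ∑ j, (pH i * pL j - pH j * pL i) * (σ i - σ j)
      = 2 * (∑ s, pH s * σ s) - 2 * (∑ s, pL s * σ s) := by
    rw [Finset.sum_congr rfl fun i _ => hinner i]
    rw [Finset.sum_add_distrib, Finset.sum_sub_distrib, Finset.sum_sub_distrib,
       ← Finset.sum_mul, ← Finset.sum_mul, hL1, hH1]
    ring
  have hnn : 0 ≤ ∑ i, ∑ j : Fin m, (pH i * pL j - pH j * pL i) * (σ i - σ j) :=
    Finset.sum_nonneg fun i _ => Finset.sum_nonneg fun j _ => hpair' i j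
  linarith [htotal ▸ hnn]

end Aux

/-- adverse selection. For every monotone strategy the interim belief lies
weakly below the prior; in particular this holds for every equilibrium strategy. -/
theorem adverse_selection
    (ρ c : ℝ) (hρ : ρ ∈ Set.Ioo (0:ℝ) 1) (hc : c ∈ Set.Ioo (0:ℝ) 1)
    (n : ℕ) (hn : 1 ≤ n) (m : ℕ) (hm : 1 ≤ m)
    (pL pH : Fin m → ℝ) (hE : IsExperiment pL pH) :
    (∀ σ : Fin m → ℝ, IsStrategy σ → MonotoneStrategy pL pH σ →
      interim ρ n pL pH σ ≤ ρ) ∧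
    (∀ σ : Fin m → ℝ, IsEquilibrium ρ c n pL pH σ →
      interim ρ n pL pH σ ≤ ρ) := by
  obtain ⟨hLnn, hHnn, hL1, hH1, hsupp, hLR⟩ := hE
  obtain ⟨hρ0, hρ1⟩ := hρ
  have main : ∀ σ : Fin m → ℝ, IsStrategy σ → MonotoneStrategy pL pH σ →
      interim ρ n pL pH σ ≤ ρ := by
    intro σ hσ hmono
    have hSL := sum_bounds pL σ hLnn hL1 hσ
    have hSH := sum_bounds pH σ hHnn hH1 hσ
    have hkey : ∑ s, pL s * σ s ≤ ∑ s, pH s * σ s :=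
      key_sum pL pH σ hL1 hH1 hσ hmono hLR
    have hrH : (0:ℝ) ≤ rej pH σ := by unfold rej; linarith [hSH.2]
    have hrLH : rej pH σ ≤ rej pL σ := by unfold rej; linarith
    have hvis : visit n pH σ ≤ visit n pL σ := by
      unfold visit
      have hn0 : (0:ℝ) < n := by exact_mod_cast hn
      apply mul_le_mul_of_nonneg_left _ (by positivity)
      exact Finset.sum_le_sum fun k _ => pow_le_pow_left₀ hrH hrLH k
    have hvH : 0 < visit n pH σ := visit_pos_s3 hn pH σ hrH
    have hvL : 0 < visit n pL σ := visit_pos_s3 hn pL σ (le_trans hrH hrLH)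
    have hD : 0 < ρ * visit n pH σ + (1 - ρ) * visit n pL σ := by
      have := mul_pos hρ0 hvH
      nlinarith
    unfold interim
    rw [div_le_iff₀ hD]
    nlinarith [mul_nonneg (mul_nonneg hρ0.le (sub_nonneg.mpr hvis)) (by linarith : (0:ℝ) ≤ 1 - ρ)]
  refine ⟨main, fun σ heq => ?_⟩
  obtain ⟨hσ, hbest⟩ := heq
  apply main σ hσ
  -- equilibrium strategies are monotone
  intro i j hσi hij
  set ψ := interim ρ n pL pH σ with hψ
  have hSL := sum_bounds pL σ hLnn hL1 hσ
  have hSH := sum_bounds pH σ hHnn hH1 hσ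
  have hrH : (0:ℝ) ≤ rej pH σ := by unfold rej; linarith [hSH.2]
  have hrL : (0:ℝ) ≤ rej pL σ := by unfold rej; linarith [hSL.2]
  have hvH : 0 < visit n pH σ := visit_pos_s3 hn pH σ hrH
  have hvL : 0 < visit n pL σ := visit_pos_s3 hn pL σ hrL
  have hD : 0 < ρ * visit n pH σ + (1 - ρ) * visit n pL σ := by nlinarith
  have hψ0 : 0 < ψ := by
    rw [hψ]; unfold interim; exact div_pos (by nlinarith) hD
  have hψ1 : ψ < 1 := by
    rw [hψ]; unfold interim
    rw [div_lt_one hD]; nlinarith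
  have hden : ∀ s : Fin m, 0 < ψ * pH s + (1 - ψ) * pL s := by
    intro s
    rcases lt_or_ge 0 (pH s) with h | h
    · nlinarith [mul_pos hψ0 h, mul_nonneg (by linarith : (0:ℝ) ≤ 1 - ψ) (hLnn s)]
    · have h0 : pH s = 0 := le_antisymm h (hHnn s)
      have hpl : 0 < pL s := by have := hsupp s; linarith
      nlinarith [mul_pos (by linarith : (0:ℝ) < 1 - ψ) hpl]
  have hpost : post ψ pL pH i < post ψ pL pH j := by
    unfold post
    rw [div_lt_div_iff₀ (hden i) (hden j)]
    nlinarith [mul_pos (mul_pos hψ0 (show (0:ℝ) < 1 - ψ by linarith)) (sub_pos.mpr hij)]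
  have hci : ¬ post ψ pL pH i < c := fun h => by
    have := (hbest i).2 h; rw [this] at hσi; linarith
  exact (hbest j).1 (lt_of_le_of_lt (not_lt.mp hci) hpost)
end
end

section
/- For every equilibrium strategy σ*, total surplus is bounded below by the no-information benchmark and above by the full-information benchmark: max{0, ρ − c} ≤ Π(σ*) ≤ ρ·(1 − c). -/
/-!
At an equilibrium, clearing the denominators of the posterior threshold `Q_{ψ*}(s) ≷ c` shows
that `σ*` accepts `s` only if `c(1-ρ)E_L p_L(s) ≤ (1-c)ρE_H p_H(s)` and rejects it only if the
reverse holds, where `E_θ = Σ_{k<n} r_θ^k = n ν_θ` is the expected number of buyers a type-`θ`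
seller visits. Summing these with weights `σ*(s)` and `1 - σ*(s)` gives
`c(1-ρ)E_L(1-r_L) ≤ (1-c)ρE_H(1-r_H)` and `(1-c)ρE_H r_H ≤ c(1-ρ)E_L r_L`.
As `1 - r^n = (1-r)E`, the first is `Π ≥ 0`. Together they force `r_H ≤ r_L`, and then the
second propagates term by term through the geometric sums to `(1-c)ρ r_H^n ≤ c(1-ρ) r_L^n`,
which is `Π ≥ ρ - c`. The upper bound only uses `0 ≤ r_θ ≤ 1`.
-/

open Finset Filter Topology

noncomputable section

def expectedVisits (n : ℕ) {m : ℕ} (p σ : Fin m → ℝ) : ℝ :=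
  ∑ k ∈ range n, rej p σ ^ k

section Rejection

variable {m : ℕ} {p σ : Fin m → ℝ}

lemma sum_mul_eq_one_sub_rej : ∑ s, p s * σ s = 1 - rej p σ :=
  (sub_sub_cancel _ _).symm

lemma sum_mul_one_sub_eq_rej (hp : ∑ s, p s = 1) : ∑ s, p s * (1 - σ s) = rej p σ := by
  simp only [rej, mul_sub, mul_one, sum_sub_distrib, hp]

lemma rej_mem_Icc (hp₀ : ∀ s, 0 ≤ p s) (hp : ∑ s, p s = 1) (hσ : IsStrategy σ) :
    rej p σ ∈ Set.Icc 0 1 := by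
  constructor
  · rw [← sum_mul_one_sub_eq_rej hp]
    exact sum_nonneg fun s _ => mul_nonneg (hp₀ s) (sub_nonneg.2 (hσ s).2)
  · exact sub_le_self _ (sum_nonneg fun s _ => mul_nonneg (hp₀ s) (hσ s).1)

lemma expectedVisits_pos {n : ℕ} (hn : n ≠ 0) (hr : 0 ≤ rej p σ) :
    0 < expectedVisits n p σ :=
  geom_sum_pos hr hn

lemma one_sub_rej_pow (n : ℕ) : 1 - rej p σ ^ n = (1 - rej p σ) * expectedVisits n p σ :=
  (mul_neg_geom_sum _ n).symm

end Rejection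

namespace IsExperiment

variable {m : ℕ} {pL pH σ : Fin m → ℝ}

lemma rej_low_mem_Icc (hE : IsExperiment pL pH) (hσ : IsStrategy σ) : rej pL σ ∈ Set.Icc 0 1 :=
  rej_mem_Icc hE.1 hE.2.2.1 hσ

lemma rej_high_mem_Icc (hE : IsExperiment pL pH) (hσ : IsStrategy σ) :
    rej pH σ ∈ Set.Icc 0 1 :=
  rej_mem_Icc hE.2.1 hE.2.2.2.1 hσ

end IsExperiment

lemma interim_eq (ρ : ℝ) (n : ℕ) {m : ℕ} (pL pH σ : Fin m → ℝ) :
    interim ρ n pL pH σ = ρ * expectedVisits n pH σ /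
      (ρ * expectedVisits n pH σ + (1 - ρ) * expectedVisits n pL σ) := by
  rcases eq_or_ne n 0 with rfl | hn
  · simp [interim, visit, expectedVisits]
  · simp only [interim, visit, expectedVisits]
    field_simp

lemma surplus_eq (ρ c : ℝ) (n : ℕ) {m : ℕ} (pL pH σ : Fin m → ℝ) :
    surplus ρ c n pL pH σ = (1 - c) * ρ * expectedVisits n pH σ * (1 - rej pH σ) -
      c * (1 - ρ) * expectedVisits n pL σ * (1 - rej pL σ) := by
  rw [surplus, one_sub_rej_pow, one_sub_rej_pow]
  ring

lemma surplus_le_of_isStrategy {ρ c : ℝ} {n m : ℕ} {pL pH σ : Fin m → ℝ}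
    (hρ : ρ ∈ Set.Icc 0 1) (hc : c ∈ Set.Icc 0 1) (hE : IsExperiment pL pH)
    (hσ : IsStrategy σ) : surplus ρ c n pL pH σ ≤ ρ * (1 - c) := by
  obtain ⟨hx₀, -⟩ := hE.rej_high_mem_Icc hσ
  obtain ⟨hy₀, hy₁⟩ := hE.rej_low_mem_Icc hσ
  have hxn := pow_nonneg hx₀ n
  have hyn := pow_le_one₀ hy₀ hy₁ (n := n)
  rw [surplus]
  nlinarith [mul_nonneg (sub_nonneg.2 hc.2) hρ.1, mul_nonneg hc.1 (sub_nonneg.2 hρ.2)]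

section Posterior

variable {m : ℕ} {pL pH : Fin m → ℝ} {u v c : ℝ} {s : Fin m}

lemma post_div_add (huv : u + v ≠ 0) :
    post (u / (u + v)) pL pH s = u * pH s / (u * pH s + v * pL s) := by
  have hv : 1 - u / (u + v) = v / (u + v) := by field_simp; ring
  rw [post, hv]
  field_simp

lemma lt_post_div_add_iff (huv : u + v ≠ 0) (hd : 0 < u * pH s + v * pL s) :
    c < post (u / (u + v)) pL pH s ↔ c * v * pL s < (1 - c) * u * pH s := by
  rw [post_div_add huv, lt_div_iff₀ hd]
  constructor <;> intro h <;> linarith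

lemma post_div_add_lt_iff (huv : u + v ≠ 0) (hd : 0 < u * pH s + v * pL s) :
    post (u / (u + v)) pL pH s < c ↔ (1 - c) * u * pH s < c * v * pL s := by
  rw [post_div_add huv, div_lt_iff₀ hd]
  constructor <;> intro h <;> linarith

end Posterior

lemma mul_sum_mul_le_of_pos {ι : Type*} [Fintype ι] {a b : ℝ} {f g w : ι → ℝ}
    (hw : ∀ i, 0 ≤ w i) (h : ∀ i, 0 < w i → b * f i ≤ a * g i) :
    b * ∑ i, f i * w i ≤ a * ∑ i, g i * w i := by
  simp only [mul_sum, ← mul_assoc]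
  refine sum_le_sum fun i _ => ?_
  rcases (hw i).eq_or_lt with hi | hi
  · simp [← hi]
  · exact mul_le_mul_of_nonneg_right (h i hi) hi.le

lemma le_of_mul_one_sub_le_of_mul_le {a b x y : ℝ} (hb : 0 < b) (hx : x ≤ 1)
    (hy : 0 ≤ y) (h₁ : b * (1 - y) ≤ a * (1 - x)) (h₂ : a * x ≤ b * y) : x ≤ y := by
  by_contra! hyx
  nlinarith [mul_lt_mul_of_pos_left hyx hb]

lemma mul_pow_mul_geom_sum_le {a b x y : ℝ} (hx : 0 ≤ x) (hxy : x ≤ y) (hb : 0 ≤ b)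
    (h : a * x ≤ b * y) (n : ℕ) :
    a * x ^ n * ∑ k ∈ range n, y ^ k ≤ b * y ^ n * ∑ k ∈ range n, x ^ k := by
  have hy : 0 ≤ y := hx.trans hxy
  simp only [mul_sum]
  refine sum_le_sum fun k hk => ?_
  obtain ⟨j, rfl⟩ : ∃ j, n = k + j + 1 := ⟨n - k - 1, by grind⟩
  have hj : a * x * x ^ j ≤ b * y * y ^ j :=
    mul_le_mul h (pow_le_pow_left₀ hx hxy j) (pow_nonneg hx j) (mul_nonneg hb hy)
  calc a * x ^ (k + j + 1) * y ^ k = (a * x * x ^ j) * (x ^ k * y ^ k) := by ring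
    _ ≤ (b * y * y ^ j) * (x ^ k * y ^ k) := by gcongr
    _ = b * y ^ (k + j + 1) * x ^ k := by ring

lemma mul_pow_le_mul_pow_of_geom_sum {A B x y : ℝ} {n : ℕ} (hn : n ≠ 0) (hx : 0 ≤ x)
    (hxy : x ≤ y) (hB : 0 ≤ B)
    (h : A * (∑ k ∈ range n, x ^ k) * x ≤ B * (∑ k ∈ range n, y ^ k) * y) :
    A * x ^ n ≤ B * y ^ n := by
  have hX := geom_sum_pos hx hn
  have hY := geom_sum_pos (hx.trans hxy) hn
  have key := mul_pow_mul_geom_sum_le (a := A * ∑ k ∈ range n, x ^ k) hx hxy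
    (mul_nonneg hB hY.le) h n
  refine le_of_mul_le_mul_right ?_ (mul_pos hX hY)
  linarith

namespace IsEquilibrium

variable {ρ c : ℝ} {n m : ℕ} {pL pH σ : Fin m → ℝ}

theorem cutoff (hσ : IsEquilibrium ρ c n pL pH σ) (hρ : ρ ∈ Set.Ioo 0 1) (hn : n ≠ 0)
    (hE : IsExperiment pL pH) (s : Fin m) :
    (0 < σ s → c * (1 - ρ) * expectedVisits n pL σ * pL s ≤
      (1 - c) * ρ * expectedVisits n pH σ * pH s) ∧
    (σ s < 1 → (1 - c) * ρ * expectedVisits n pH σ * pH s ≤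
      c * (1 - ρ) * expectedVisits n pL σ * pL s) := by
  have hu : 0 < ρ * expectedVisits n pH σ :=
    mul_pos hρ.1 (expectedVisits_pos hn (hE.rej_high_mem_Icc hσ.1).1)
  have hv : 0 < (1 - ρ) * expectedVisits n pL σ :=
    mul_pos (sub_pos.2 hρ.2) (expectedVisits_pos hn (hE.rej_low_mem_Icc hσ.1).1)
  have huv := (add_pos hu hv).ne'
  obtain ⟨hL₀, hH₀, -, -, hsupp, -⟩ := hE
  have hd : 0 < ρ * expectedVisits n pH σ * pH s + (1 - ρ) * expectedVisits n pL σ * pL s := by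
    rcases (hH₀ s).eq_or_lt with h | h
    · rw [← h, mul_zero, zero_add]
      exact mul_pos hv (by linarith [hsupp s])
    · exact add_pos_of_pos_of_nonneg (mul_pos hu h) (mul_nonneg hv.le (hL₀ s))
  obtain ⟨hacc, hrej⟩ := hσ.2 s
  rw [interim_eq, lt_post_div_add_iff huv hd] at hacc
  rw [interim_eq, post_div_add_lt_iff huv hd] at hrej
  constructor
  · intro hpos
    by_contra! h
    exact hpos.ne' (hrej (by linarith))
  · intro hlt
    by_contra! h
    exact hlt.ne (hacc (by linarith))

theorem weighted_accept_le (hσ : IsEquilibrium ρ c n pL pH σ) (hρ : ρ ∈ Set.Ioo 0 1)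
    (hn : n ≠ 0) (hE : IsExperiment pL pH) :
    c * (1 - ρ) * expectedVisits n pL σ * (1 - rej pL σ) ≤
      (1 - c) * ρ * expectedVisits n pH σ * (1 - rej pH σ) := by
  simpa only [sum_mul_eq_one_sub_rej] using
    mul_sum_mul_le_of_pos (fun s => (hσ.1 s).1) fun s => (hσ.cutoff hρ hn hE s).1

theorem weighted_rej_le (hσ : IsEquilibrium ρ c n pL pH σ) (hρ : ρ ∈ Set.Ioo 0 1)
    (hn : n ≠ 0) (hE : IsExperiment pL pH) :
    (1 - c) * ρ * expectedVisits n pH σ * rej pH σ ≤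
      c * (1 - ρ) * expectedVisits n pL σ * rej pL σ := by
  simpa only [sum_mul_one_sub_eq_rej hE.2.2.1, sum_mul_one_sub_eq_rej hE.2.2.2.1] using
    mul_sum_mul_le_of_pos (w := fun s => 1 - σ s) (fun s => sub_nonneg.2 (hσ.1 s).2)
      fun s hs => (hσ.cutoff hρ hn hE s).2 (sub_pos.1 hs)

theorem surplus_nonneg (hσ : IsEquilibrium ρ c n pL pH σ) (hρ : ρ ∈ Set.Ioo 0 1)
    (hn : n ≠ 0) (hE : IsExperiment pL pH) : 0 ≤ surplus ρ c n pL pH σ := by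
  rw [surplus_eq]
  linarith [hσ.weighted_accept_le hρ hn hE]

theorem rej_high_le_rej_low (hσ : IsEquilibrium ρ c n pL pH σ) (hρ : ρ ∈ Set.Ioo 0 1)
    (hc : 0 < c) (hn : n ≠ 0) (hE : IsExperiment pL pH) : rej pH σ ≤ rej pL σ := by
  obtain ⟨hy₀, -⟩ := hE.rej_low_mem_Icc hσ.1
  have hb : 0 < c * (1 - ρ) * expectedVisits n pL σ :=
    mul_pos (mul_pos hc (sub_pos.2 hρ.2)) (expectedVisits_pos hn hy₀)
  exact le_of_mul_one_sub_le_of_mul_le hb (hE.rej_high_mem_Icc hσ.1).2 hy₀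
    (hσ.weighted_accept_le hρ hn hE) (hσ.weighted_rej_le hρ hn hE)

theorem sub_le_surplus (hσ : IsEquilibrium ρ c n pL pH σ) (hρ : ρ ∈ Set.Ioo 0 1)
    (hc : 0 < c) (hn : n ≠ 0) (hE : IsExperiment pL pH) : ρ - c ≤ surplus ρ c n pL pH σ := by
  have hpow : (1 - c) * ρ * rej pH σ ^ n ≤ c * (1 - ρ) * rej pL σ ^ n :=
    mul_pow_le_mul_pow_of_geom_sum hn (hE.rej_high_mem_Icc hσ.1).1
      (hσ.rej_high_le_rej_low hρ hc hn hE) (mul_nonneg hc.le (sub_pos.2 hρ.2).le)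
      (hσ.weighted_rej_le hρ hn hE)
  rw [surplus]
  linarith

end IsEquilibrium

theorem surplus_benchmarks_general
    (ρ c : ℝ) (hρ : ρ ∈ Set.Ioo (0:ℝ) 1) (hc : c ∈ Set.Ioo (0:ℝ) 1)
    (n : ℕ) (hn : 1 ≤ n) (m : ℕ)
    (pL pH : Fin m → ℝ) (hE : IsExperiment pL pH)
    (σ : Fin m → ℝ) (hσ : IsEquilibrium ρ c n pL pH σ) :
    max 0 (ρ - c) ≤ surplus ρ c n pL pH σ ∧
    surplus ρ c n pL pH σ ≤ ρ * (1 - c) := by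
  have hn₀ : n ≠ 0 := Nat.one_le_iff_ne_zero.mp hn
  exact ⟨max_le (hσ.surplus_nonneg hρ hn₀ hE) (hσ.sub_le_surplus hρ hc.1 hn₀ hE),
    surplus_le_of_isStrategy (Set.Ioo_subset_Icc_self hρ) (Set.Ioo_subset_Icc_self hc) hE hσ.1⟩

/-- equilibrium total surplus lies between the no-information benchmark
`max{0, ρ - c}` and the full-information benchmark `ρ·(1-c)`. -/
theorem surplus_benchmarks
    (ρ c : ℝ) (hρ : ρ ∈ Set.Ioo (0:ℝ) 1) (hc : c ∈ Set.Ioo (0:ℝ) 1)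
    (n : ℕ) (hn : 1 ≤ n) (m : ℕ) (hm : 1 ≤ m)
    (pL pH : Fin m → ℝ) (hE : IsExperiment pL pH)
    (σ : Fin m → ℝ) (hσ : IsEquilibrium ρ c n pL pH σ) :
    max 0 (ρ - c) ≤ surplus ρ c n pL pH σ ∧
    surplus ρ c n pL pH σ ≤ ρ * (1 - c) :=
  surplus_benchmarks_general ρ c hρ hc n hn m pL pH hE σ hσ
end
end

section
/- Suppose no outcome fully reveals High quality: p_L(s_m) > 0 (equivalently, the likelihood ratio p_H(s)/p_L(s) is bounded from above over S). For each n ≥ 1 let σ̂_n be a most selective n-equilibrium strategy and Π_n = Π^n(σ̂_n) the corresponding total surplus. Then the sequence (Π_n) is eventually weakly decreasing (there exists N such that Π_{n+1} ≤ Π_n for all n ≥ N) and converges to the no-information benchmark max{0, ρ − c}. -/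
open Finset Filter Topology

noncomputable section

/-!
Because `pL > 0` everywhere, a buyer facing strategy `σ` accepts exactly when the likelihood
ratio `lr s = pH s / pL s` is above the cutoff `κₙ(σ) = c (1 - ρ) V_L / ((1 - c) ρ V_H)`, where
`V_θ = ∑_{k<n} r_θ^k`; with `a_θ = 1 - r_θ` the acceptance probabilities, `V_θ a_θ = 1 - r_θⁿ`
and the surplus equals `(1 - c) ρ V_H ∑ₛ pL s σ s (lr s - κₙ(σ))`.

If `ρ < c`, an equilibrium accepting the top signal eventually has negative surplus, so
eventually all equilibrium surplus is zero. If `c ≤ ρ` and `c (1 - ρ) < (1 - c) ρ lr top`, every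
equilibrium accepts the top signal, so both rejection probabilities are at most `1 - pL top < 1`
and the surplus tends to `ρ - c`. For monotonicity: once `n (1 - pL top)^(n-1)` is small,
accepting more of a class lowers the cutoff, which rules out mixing in the most selective
equilibrium; the cutoff of a fixed strategy is monotone in `n`, so the equilibria among the
finitely many pure strategies stabilise and the most selective equilibrium is eventually a fixed
strategy. Its surplus satisfies `Πₙ - Πₙ₊₁ = c (1 - ρ) a_L r_Lⁿ - (1 - c) ρ a_H r_Hⁿ`, which is
eventually nonnegative since `r_H < r_L` or `r_H = 0`. In the remaining case `ρ = c` and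
`pH = pL`, and the surplus vanishes identically.
-/

lemma pow_sub_pow_le_of_le {x y γ : ℝ} (n : ℕ) (hy : 0 ≤ y) (hxy : y ≤ x) (hxγ : x ≤ γ) :
    x ^ n - y ^ n ≤ n * (x - y) * γ ^ (n - 1) := by
  have hx : 0 ≤ x := hy.trans hxy
  have hmax : max |x| |y| ≤ γ := by
    rw [abs_of_nonneg hx, abs_of_nonneg hy]
    exact max_le hxγ (hxy.trans hxγ)
  calc x ^ n - y ^ n ≤ |x ^ n - y ^ n| := le_abs_self _
    _ ≤ |x - y| * n * max |x| |y| ^ (n - 1) := abs_pow_sub_pow_le x y n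
    _ ≤ (x - y) * n * γ ^ (n - 1) := by
        rw [abs_of_nonneg (sub_nonneg.2 hxy)]
        gcongr
    _ = n * (x - y) * γ ^ (n - 1) := by ring

lemma geom_sum_mul_geom_sum_succ_le {x y : ℝ} (n : ℕ) (hy : 0 ≤ y) (hxy : y ≤ x) :
    (∑ i ∈ range n, x ^ i) * ∑ i ∈ range (n + 1), y ^ i ≤
      (∑ i ∈ range (n + 1), x ^ i) * ∑ i ∈ range n, y ^ i := by
  have hx : 0 ≤ x := hy.trans hxy
  have key : y ^ n * ∑ i ∈ range n, x ^ i ≤ x ^ n * ∑ i ∈ range n, y ^ i := by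
    rw [mul_sum, mul_sum]
    refine sum_le_sum fun i hi => ?_
    obtain ⟨k, rfl⟩ : ∃ k, n = i + k := ⟨n - i, by have := mem_range.1 hi; omega⟩
    calc y ^ (i + k) * x ^ i = x ^ i * y ^ i * y ^ k := by ring
      _ ≤ x ^ i * y ^ i * x ^ k := by gcongr
      _ = x ^ (i + k) * y ^ i := by ring
  rw [sum_range_succ, sum_range_succ]
  linear_combination key

/-- The leading term `b₁ a₀ - b₀ a₁ = (b₁ - b₀) (a₀ - l b₀)` dominates the correction
`(1 - b₀)ⁿ - (1 - b₁)ⁿ ≤ n (b₁ - b₀) (1 - M)ⁿ⁻¹`. -/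
lemma one_sub_pow_mul_le {n : ℕ} {M l a₀ a₁ b₀ b₁ : ℝ} (hn₀ : n ≠ 0) (hM : 0 < M)
    (hb₀ : M ≤ b₀) (hb : b₀ ≤ b₁) (hb₁ : b₁ ≤ 1) (ha₀ : M ≤ a₀) (ha : a₀ ≤ a₁) (ha₁ : a₁ ≤ 1)
    (hrel : a₁ - a₀ = l * (b₁ - b₀)) (hn : n * (1 - M) ^ (n - 1) ≤ M ^ 2 * (a₀ - l * b₀)) :
    (1 - (1 - b₁) ^ n) * (1 - (1 - a₀) ^ n) * (b₀ * a₁) ≤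
      (1 - (1 - b₀) ^ n) * (1 - (1 - a₁) ^ n) * (b₁ * a₀) := by
  have hγ : (1 - M) ^ n ≤ 1 - M := pow_le_of_le_one (by linarith) (by linarith) hn₀
  have hu : (1 - b₁) ^ n ≤ (1 - b₀) ^ n := pow_le_pow_left₀ (by linarith) (by linarith) n
  have hu₀ : (1 - b₀) ^ n ≤ 1 - M := (pow_le_pow_left₀ (by linarith) (by linarith) n).trans hγ
  have hv₁ : 0 ≤ (1 - a₁) ^ n := pow_nonneg (by linarith) n
  have hv : (1 - a₁) ^ n ≤ (1 - a₀) ^ n := pow_le_pow_left₀ (by linarith) (by linarith) n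
  have hv₀ : (1 - a₀) ^ n ≤ 1 - M := (pow_le_pow_left₀ (by linarith) (by linarith) n).trans hγ
  set t := (n : ℝ) * (1 - M) ^ (n - 1)
  set P := (1 - (1 - b₀) ^ n) * (1 - (1 - a₁) ^ n)
  have hΔ : 0 ≤ b₁ - b₀ := sub_nonneg.2 hb
  have hdiff : (1 - b₀) ^ n - (1 - b₁) ^ n ≤ (b₁ - b₀) * t := by
    linear_combination pow_sub_pow_le_of_le n (by linarith : 0 ≤ 1 - b₁)
      (by linarith : 1 - b₁ ≤ 1 - b₀) (by linarith : 1 - b₀ ≤ 1 - M)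
  have ht : 0 ≤ t := by
    have : 0 ≤ 1 - M := by linarith
    positivity
  have hG : 0 ≤ a₀ - l * b₀ := nonneg_of_mul_nonneg_right (ht.trans hn) (by positivity)
  have hMP : M ^ 2 ≤ P := by
    rw [sq]
    exact mul_le_mul (by linarith) (by linarith) hM.le (by linarith)
  have htP : t ≤ (a₀ - l * b₀) * P :=
    hn.trans (mul_comm (M ^ 2) _ ▸ mul_le_mul_of_nonneg_left hMP hG)
  have hba : b₀ * a₁ ≤ 1 := by nlinarith
  calc (1 - (1 - b₁) ^ n) * (1 - (1 - a₀) ^ n) * (b₀ * a₁)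
      ≤ (P + (b₁ - b₀) * t) * (b₀ * a₁) := by
        gcongr
        · have := hM.trans_le hb₀
          have := hM.trans_le (ha₀.trans ha)
          positivity
        · nlinarith [mul_le_mul_of_nonneg_left hv (by linarith : 0 ≤ 1 - (1 - b₁) ^ n),
            mul_nonneg (sub_nonneg.2 hu) hv₁]
    _ ≤ P * (b₀ * a₁) + (b₁ - b₀) * t := by nlinarith
    _ ≤ P * (b₀ * a₁) + (b₁ - b₀) * ((a₀ - l * b₀) * P) := by gcongr
    _ = P * (b₁ * a₀) := by linear_combination P * b₀ * hrel

lemma geom_sum_one_sub_mul_le {n : ℕ} {M l a₀ a₁ b₀ b₁ : ℝ} (hM : 0 < M)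
    (hb₀ : M ≤ b₀) (hb : b₀ ≤ b₁) (hb₁ : b₁ ≤ 1) (ha₀ : M ≤ a₀) (ha : a₀ ≤ a₁) (ha₁ : a₁ ≤ 1)
    (hrel : a₁ - a₀ = l * (b₁ - b₀)) (hn : n * (1 - M) ^ (n - 1) ≤ M ^ 2 * (a₀ - l * b₀)) :
    (∑ i ∈ range n, (1 - b₁) ^ i) * ∑ i ∈ range n, (1 - a₀) ^ i ≤
      (∑ i ∈ range n, (1 - b₀) ^ i) * ∑ i ∈ range n, (1 - a₁) ^ i := by
  rcases eq_or_ne n 0 with rfl | hn₀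
  · simp
  have hS : ∀ x : ℝ, (∑ i ∈ range n, (1 - x) ^ i) * x = 1 - (1 - x) ^ n := fun x => by
    simpa using geom_sum_mul_neg (1 - x) n
  have hpos : 0 < b₁ * a₀ * (b₀ * a₁) := by
    have := hM.trans_le hb₀; have := hM.trans_le ha₀
    have := hM.trans_le (hb₀.trans hb); have := hM.trans_le (ha₀.trans ha)
    positivity
  refine le_of_mul_le_mul_right ?_ hpos
  calc _ = ((∑ i ∈ range n, (1 - b₁) ^ i) * b₁) * ((∑ i ∈ range n, (1 - a₀) ^ i) * a₀) *
        (b₀ * a₁) := by ring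
    _ ≤ ((∑ i ∈ range n, (1 - b₀) ^ i) * b₀) * ((∑ i ∈ range n, (1 - a₁) ^ i) * a₁) *
        (b₁ * a₀) := by
      rw [hS, hS, hS, hS]
      exact one_sub_pow_mul_le hn₀ hM hb₀ hb hb₁ ha₀ ha ha₁ hrel hn
    _ = _ := by ring

lemma eventually_mul_pow_le_mul_pow {x y : ℝ} (A : ℝ) {B : ℝ} (hy : 0 ≤ y) (hyx : y < x)
    (hB : 0 < B) : ∀ᶠ n : ℕ in atTop, A * y ^ n ≤ B * x ^ n := by
  have hx : 0 ≤ x := hy.trans hyx.le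
  filter_upwards [(isLittleO_pow_pow_of_lt_left hy hyx).bound
    (c := B / (|A| + 1)) (by positivity)] with n hn
  rw [Real.norm_eq_abs, Real.norm_eq_abs, abs_of_nonneg (pow_nonneg hy n),
    abs_of_nonneg (pow_nonneg hx n)] at hn
  calc A * y ^ n ≤ |A| * y ^ n := mul_le_mul_of_nonneg_right (le_abs_self A) (pow_nonneg hy n)
    _ ≤ (|A| + 1) * (B / (|A| + 1) * x ^ n) := by gcongr; linarith
    _ = B * x ^ n := by field_simp

lemma tendsto_nat_mul_pow_pred {γ : ℝ} (h₀ : 0 ≤ γ) (h₁ : γ < 1) :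
    Tendsto (fun n : ℕ => n * γ ^ (n - 1)) atTop (𝓝 0) := by
  have h := ((tendsto_self_mul_const_pow_of_lt_one h₀ h₁).add
    (tendsto_pow_atTop_nhds_zero_of_lt_one h₀ h₁)).comp (tendsto_sub_atTop_nat 1)
  rw [add_zero] at h
  refine h.congr' ?_
  filter_upwards [eventually_ge_atTop 1] with n hn
  simp only [Function.comp_apply, Nat.cast_sub hn, Nat.cast_one]
  ring

lemma eventually_and_or_eventually_not {P Q : ℕ → Prop} (hP : Monotone P) (hQ : Antitone Q) :
    (∀ᶠ n in atTop, P n ∧ Q n) ∨ ∀ᶠ n in atTop, ¬(P n ∧ Q n) := by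
  by_cases hQall : ∀ n, Q n
  · by_cases hPex : ∃ n, P n
    · obtain ⟨n₀, hn₀⟩ := hPex
      exact .inl (eventually_atTop.2 ⟨n₀, fun n hn => ⟨hP hn hn₀, hQall n⟩⟩)
    · push Not at hPex
      exact .inr (Eventually.of_forall fun n h => hPex n h.1)
  · push Not at hQall
    obtain ⟨n₀, hn₀⟩ := hQall
    exact .inr (eventually_atTop.2 ⟨n₀, fun n hn h => hn₀ (hQ hn h.2)⟩)

lemma exists_succ_le_and_tendsto_of_eventually_eq_zero {u : ℕ → ℝ}
    (h : ∀ᶠ k in atTop, u k = 0) :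
    (∃ N, ∀ k, N ≤ k → u (k + 1) ≤ u k) ∧ Tendsto u atTop (𝓝 0) := by
  obtain ⟨N, hN⟩ := eventually_atTop.1 h
  exact ⟨⟨N, fun k hk => (hN (k + 1) (by omega)).trans_le (hN k hk).ge⟩,
    tendsto_const_nhds.congr' (h.mono fun _ hk => hk.symm)⟩

namespace Market

variable {m : ℕ}

def lr (pL pH : Fin m → ℝ) (s : Fin m) : ℝ := pH s / pL s

def acceptProb (p σ : Fin m → ℝ) : ℝ := ∑ s, p s * σ s

def visitSum (n : ℕ) (p σ : Fin m → ℝ) : ℝ := ∑ k ∈ range n, rej p σ ^ k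

/-- A buyer accepts at `s` iff `lr s` exceeds this ratio; it is `c (1 - ψ) / ((1 - c) ψ)` at the
interim belief `ψ`. -/
def cutoff (ρ c : ℝ) (n : ℕ) (pL pH σ : Fin m → ℝ) : ℝ :=
  c * (1 - ρ) * visitSum n pL σ / ((1 - c) * ρ * visitSum n pH σ)

def IsThreshold (pL pH σ : Fin m → ℝ) (κ : ℝ) : Prop :=
  ∀ s, (κ < lr pL pH s → σ s = 1) ∧ (lr pL pH s < κ → σ s = 0)

def acceptAbove (pL pH : Fin m → ℝ) (l : ℝ) : Fin m → ℝ :=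
  fun s => if l < lr pL pH s then 1 else 0

structure BoundedLR (pL pH : Fin m → ℝ) (top : Fin m) : Prop where
  pL_pos : ∀ s, 0 < pL s
  pH_nonneg : ∀ s, 0 ≤ pH s
  sum_pL : ∑ s, pL s = 1
  sum_pH : ∑ s, pH s = 1
  lr_le_top : ∀ s, lr pL pH s ≤ lr pL pH top

/-- Large enough for `geom_sum_one_sub_mul_le` with `M = pL top` at every class below the top
(see `cutoff_le_cutoff_acceptAbove`). -/
def ManyBuyers (n : ℕ) (pL pH : Fin m → ℝ) (top : Fin m) : Prop :=
  ∀ s, lr pL pH s < lr pL pH top →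
    n * (1 - pL top) ^ (n - 1) ≤ pL top ^ 3 * (lr pL pH top - lr pL pH s)

section Acceptance

variable {p σ τ : Fin m → ℝ}

lemma rej_eq (p σ : Fin m → ℝ) : rej p σ = 1 - acceptProb p σ := rfl

lemma isStrategy_acceptAbove (pL pH : Fin m → ℝ) (l : ℝ) : IsStrategy (acceptAbove pL pH l) :=
  fun s => by unfold acceptAbove; split_ifs <;> norm_num

lemma acceptProb_nonneg (hp : ∀ s, 0 ≤ p s) (hσ : IsStrategy σ) : 0 ≤ acceptProb p σ :=
  sum_nonneg fun s _ => mul_nonneg (hp s) (hσ s).1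

lemma acceptProb_le_one (hp : ∀ s, 0 ≤ p s) (hp₁ : ∑ s, p s = 1) (hσ : IsStrategy σ) :
    acceptProb p σ ≤ 1 :=
  hp₁ ▸ sum_le_sum fun s _ => mul_le_of_le_one_right (hp s) (hσ s).2

lemma acceptProb_mono (hp : ∀ s, 0 ≤ p s) (h : ∀ s, σ s ≤ τ s) :
    acceptProb p σ ≤ acceptProb p τ :=
  sum_le_sum fun s _ => mul_le_mul_of_nonneg_left (h s) (hp s)

lemma le_acceptProb (hp : ∀ s, 0 ≤ p s) (hσ : IsStrategy σ) {s : Fin m} (hs : σ s = 1) :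
    p s ≤ acceptProb p σ := by
  have := single_le_sum (f := fun t => p t * σ t) (fun t _ => mul_nonneg (hp t) (hσ t).1)
    (mem_univ s)
  rwa [hs, mul_one] at this

lemma acceptProb_of_forall_eq_one (hp₁ : ∑ s, p s = 1) (h : ∀ s, σ s = 1) :
    acceptProb p σ = 1 := by
  simp [acceptProb, h, hp₁]

lemma rej_nonneg (hp : ∀ s, 0 ≤ p s) (hp₁ : ∑ s, p s = 1) (hσ : IsStrategy σ) : 0 ≤ rej p σ :=
  sub_nonneg.2 (acceptProb_le_one hp hp₁ hσ)

lemma visitSum_pos (hp : ∀ s, 0 ≤ p s) (hp₁ : ∑ s, p s = 1) (hσ : IsStrategy σ) {n : ℕ}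
    (hn : n ≠ 0) : 0 < visitSum n p σ :=
  geom_sum_pos (rej_nonneg hp hp₁ hσ) hn

lemma visitSum_mul_acceptProb (n : ℕ) (p σ : Fin m → ℝ) :
    visitSum n p σ * acceptProb p σ = 1 - rej p σ ^ n := by
  rw [← geom_sum_mul_neg, rej_eq, sub_sub_cancel]
  rfl

lemma visit_eq (n : ℕ) (p σ : Fin m → ℝ) : visit n p σ = visitSum n p σ / n := by
  rw [visit, visitSum, one_div_mul_eq_div]

end Acceptance

variable {ρ c : ℝ} {n : ℕ} {pL pH σ : Fin m → ℝ} {top : Fin m}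

namespace BoundedLR

lemma of_isExperiment (hE : IsExperiment pL pH) (hmax : ∀ s, s ≤ top) (htop : 0 < pL top) :
    BoundedLR pL pH top := by
  obtain ⟨hL, hH, hsL, hsH, hsupp, hmlr⟩ := hE
  have hpos : ∀ s, 0 < pL s := fun s => (hL s).lt_of_ne fun h0 => by
    have := hmlr s top (hmax s)
    rw [← h0, mul_zero] at this
    have := hsupp s
    nlinarith [mul_nonneg (hH top) (hL s)]
  refine ⟨hpos, hH, hsL, hsH, fun s => ?_⟩
  rw [lr, lr, div_le_div_iff₀ (hpos s) (hpos top)]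
  exact hmlr s top (hmax s)

lemma pL_le_one (E : BoundedLR pL pH top) (s : Fin m) : pL s ≤ 1 :=
  E.sum_pL ▸ single_le_sum (fun t _ => (E.pL_pos t).le) (mem_univ s)

lemma pH_eq (E : BoundedLR pL pH top) (s : Fin m) : pH s = lr pL pH s * pL s :=
  (div_mul_cancel₀ _ (E.pL_pos s).ne').symm

lemma one_le_lr_top (E : BoundedLR pL pH top) : 1 ≤ lr pL pH top := by
  by_contra! h
  have : ∑ s, pH s < ∑ s, pL s := sum_lt_sum_of_nonempty ⟨top, mem_univ _⟩ fun s _ => by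
    rw [E.pH_eq s]
    exact mul_lt_of_lt_one_left (E.pL_pos s) ((E.lr_le_top s).trans_lt h)
  linarith [E.sum_pL, E.sum_pH]

lemma acceptProb_pH_sub (E : BoundedLR pL pH top) (l : ℝ) (σ : Fin m → ℝ) :
    acceptProb pH σ - l * acceptProb pL σ = ∑ s, pL s * σ s * (lr pL pH s - l) := by
  simp only [acceptProb, mul_sum, ← sum_sub_distrib, E.pH_eq]
  exact sum_congr rfl fun s _ => by ring

lemma acceptProb_pH_sub_pL (E : BoundedLR pL pH top) (σ : Fin m → ℝ) :
    acceptProb pH σ - acceptProb pL σ = ∑ s, pL s * (1 - σ s) * (1 - lr pL pH s) := by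
  have h₀ : ∑ s, pL s * (1 - lr pL pH s) = 0 := by
    have hs : ∀ s, pL s * (1 - lr pL pH s) = pL s - pH s := fun s => by rw [E.pH_eq]; ring
    simp only [hs, sum_sub_distrib, E.sum_pL, E.sum_pH, sub_self]
  have hs : ∀ s, pL s * σ s * (lr pL pH s - 1) =
      pL s * (1 - σ s) * (1 - lr pL pH s) - pL s * (1 - lr pL pH s) := fun s => by ring
  rw [← one_mul (acceptProb pL σ), E.acceptProb_pH_sub]
  simp only [hs, sum_sub_distrib, h₀, sub_zero]

lemma acceptProb_pH_le (E : BoundedLR pL pH top) (hσ : IsStrategy σ) :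
    acceptProb pH σ ≤ lr pL pH top * acceptProb pL σ := by
  rw [← sub_nonpos, E.acceptProb_pH_sub]
  exact sum_nonpos fun s _ =>
    mul_nonpos_of_nonneg_of_nonpos (mul_nonneg (E.pL_pos s).le (hσ s).1)
      (sub_nonpos.2 (E.lr_le_top s))

lemma pL_top_le_acceptProb_pH (E : BoundedLR pL pH top) (hσ : IsStrategy σ) (h : σ top = 1) :
    pL top ≤ acceptProb pH σ :=
  calc pL top ≤ lr pL pH top * pL top := le_mul_of_one_le_left (E.pL_pos top).le E.one_le_lr_top
    _ = pH top := (E.pH_eq top).symm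
    _ ≤ acceptProb pH σ := le_acceptProb E.pH_nonneg hσ h

end BoundedLR

lemma lt_post_iff {ψ : ℝ} (hψ : ψ ∈ Set.Ioo (0:ℝ) 1) (hc : c ∈ Set.Ioo (0:ℝ) 1) {s : Fin m}
    (hL : 0 < pL s) (hH : 0 ≤ pH s) :
    c < post ψ pL pH s ↔ c * (1 - ψ) / ((1 - c) * ψ) < lr pL pH s := by
  obtain ⟨hψ₀, hψ₁⟩ := hψ
  obtain ⟨hc₀, hc₁⟩ := hc
  have hD : 0 < ψ * pH s + (1 - ψ) * pL s := by nlinarith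
  rw [post, lr, lt_div_iff₀ hD, div_lt_div_iff₀ (by nlinarith) hL]
  constructor <;> intro h <;> linarith

lemma post_lt_iff {ψ : ℝ} (hψ : ψ ∈ Set.Ioo (0:ℝ) 1) (hc : c ∈ Set.Ioo (0:ℝ) 1) {s : Fin m}
    (hL : 0 < pL s) (hH : 0 ≤ pH s) :
    post ψ pL pH s < c ↔ lr pL pH s < c * (1 - ψ) / ((1 - c) * ψ) := by
  obtain ⟨hψ₀, hψ₁⟩ := hψ
  obtain ⟨hc₀, hc₁⟩ := hc
  have hD : 0 < ψ * pH s + (1 - ψ) * pL s := by nlinarith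
  rw [post, lr, div_lt_iff₀ hD, div_lt_div_iff₀ hL (by nlinarith)]
  constructor <;> intro h <;> linarith

lemma interim_mem_Ioo (hρ : ρ ∈ Set.Ioo (0:ℝ) 1) (hn : n ≠ 0) (hH : 0 < visitSum n pH σ)
    (hL : 0 < visitSum n pL σ) : interim ρ n pL pH σ ∈ Set.Ioo 0 1 := by
  obtain ⟨hρ₀, hρ₁⟩ := hρ
  have hn' : (0 : ℝ) < n := by positivity
  rw [interim, visit_eq, visit_eq]
  constructor
  · have := sub_pos.2 hρ₁
    positivity
  · rw [div_lt_one (by have := sub_pos.2 hρ₁; positivity)]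
    have := sub_pos.2 hρ₁
    have : 0 < (1 - ρ) * (visitSum n pL σ / n) := by positivity
    linarith

lemma odds_interim (hρ : ρ ∈ Set.Ioo (0:ℝ) 1) (hc : c ∈ Set.Ioo (0:ℝ) 1) (hn : n ≠ 0)
    (hH : 0 < visitSum n pH σ) (hL : 0 < visitSum n pL σ) :
    c * (1 - interim ρ n pL pH σ) / ((1 - c) * interim ρ n pL pH σ) = cutoff ρ c n pL pH σ := by
  obtain ⟨hρ₀, hρ₁⟩ := hρ
  obtain ⟨hc₀, hc₁⟩ := hc
  have := sub_pos.2 hρ₁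
  have := sub_pos.2 hc₁
  have hn' : (0 : ℝ) < n := by positivity
  rw [interim, cutoff, visit_eq, visit_eq]
  field_simp
  ring

theorem isEquilibrium_iff (E : BoundedLR pL pH top) (hρ : ρ ∈ Set.Ioo (0:ℝ) 1)
    (hc : c ∈ Set.Ioo (0:ℝ) 1) (hn : n ≠ 0) :
    IsEquilibrium ρ c n pL pH σ ↔ IsStrategy σ ∧ IsThreshold pL pH σ (cutoff ρ c n pL pH σ) := by
  refine and_congr_right fun hσ => forall_congr' fun s => ?_
  have hH := visitSum_pos E.pH_nonneg E.sum_pH hσ hn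
  have hL := visitSum_pos (fun s => (E.pL_pos s).le) E.sum_pL hσ hn
  have hψ := interim_mem_Ioo hρ hn hH hL
  rw [lt_post_iff hψ hc (E.pL_pos s) (E.pH_nonneg s), post_lt_iff hψ hc (E.pL_pos s)
    (E.pH_nonneg s), odds_interim hρ hc hn hH hL]

lemma surplus_eq_sum (E : BoundedLR pL pH top) (hρ : ρ ∈ Set.Ioo (0:ℝ) 1)
    (hc : c ∈ Set.Ioo (0:ℝ) 1) (hn : n ≠ 0) (hσ : IsStrategy σ) :
    surplus ρ c n pL pH σ = (1 - c) * ρ * visitSum n pH σ *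
      ∑ s, pL s * σ s * (lr pL pH s - cutoff ρ c n pL pH σ) := by
  have hH := visitSum_pos E.pH_nonneg E.sum_pH hσ hn
  have := hρ.1
  have := sub_pos.2 hc.2
  have hκ : (1 - c) * ρ * visitSum n pH σ * cutoff ρ c n pL pH σ =
      c * (1 - ρ) * visitSum n pL σ := by
    rw [cutoff]
    field_simp
  rw [← E.acceptProb_pH_sub, surplus, ← visitSum_mul_acceptProb, ← visitSum_mul_acceptProb]
  linear_combination (acceptProb pL σ) * hκ

namespace IsThreshold

variable {κ : ℝ}

lemma mul_sub_nonneg (hth : IsThreshold pL pH σ κ) (hσ : IsStrategy σ) (s : Fin m) :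
    0 ≤ σ s * (lr pL pH s - κ) := by
  rcases le_or_gt κ (lr pL pH s) with h | h
  · exact mul_nonneg (hσ s).1 (sub_nonneg.2 h)
  · rw [(hth s).2 h, zero_mul]

lemma one_sub_mul_sub_nonneg (hth : IsThreshold pL pH σ κ) (hσ : IsStrategy σ) (s : Fin m) :
    0 ≤ (1 - σ s) * (κ - lr pL pH s) := by
  rcases le_or_gt (lr pL pH s) κ with h | h
  · exact mul_nonneg (sub_nonneg.2 (hσ s).2) (sub_nonneg.2 h)
  · rw [(hth s).1 h, sub_self, zero_mul]

lemma mul_sub_one_nonneg (hth : IsThreshold pL pH σ κ) (hσ : IsStrategy σ) (hκ : 1 ≤ κ)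
    (s : Fin m) : 0 ≤ σ s * (lr pL pH s - 1) := by
  have := hth.mul_sub_nonneg hσ s
  have := mul_nonneg (hσ s).1 (sub_nonneg.2 hκ)
  linarith

lemma one_sub_mul_one_sub_nonneg (hth : IsThreshold pL pH σ κ) (hσ : IsStrategy σ)
    (hκ : κ ≤ 1) (s : Fin m) : 0 ≤ (1 - σ s) * (1 - lr pL pH s) := by
  have := hth.one_sub_mul_sub_nonneg hσ s
  have := mul_nonneg (sub_nonneg.2 (hσ s).2) (sub_nonneg.2 hκ)
  linarith

/-- Splitting at `κ = 1`: above it the accepted signals favour `H`, below it the rejected ones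
favour `L`. -/
lemma acceptProb_pL_le (E : BoundedLR pL pH top) (hth : IsThreshold pL pH σ κ)
    (hσ : IsStrategy σ) : acceptProb pL σ ≤ acceptProb pH σ := by
  rw [← sub_nonneg]
  rcases le_or_gt 1 κ with hκ | hκ
  · rw [← one_mul (acceptProb pL σ), E.acceptProb_pH_sub]
    exact sum_nonneg fun s _ => mul_assoc (pL s) _ _ ▸
      mul_nonneg (E.pL_pos s).le (hth.mul_sub_one_nonneg hσ hκ s)
  · rw [E.acceptProb_pH_sub_pL]
    exact sum_nonneg fun s _ => mul_assoc (pL s) _ _ ▸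
      mul_nonneg (E.pL_pos s).le (hth.one_sub_mul_one_sub_nonneg hσ hκ.le s)

lemma acceptProb_pL_lt_or (E : BoundedLR pL pH top) (hth : IsThreshold pL pH σ κ)
    (hσ : IsStrategy σ) (hκ : κ < lr pL pH top) :
    acceptProb pL σ < acceptProb pH σ ∨ acceptProb pH σ = 1 := by
  rcases le_or_gt 1 κ with h1 | h1
  · left
    rw [← sub_pos, ← one_mul (acceptProb pL σ), E.acceptProb_pH_sub]
    refine sum_pos' (fun s _ => ?_) ⟨top, mem_univ _, ?_⟩
    · exact mul_assoc (pL s) _ _ ▸ mul_nonneg (E.pL_pos s).le (hth.mul_sub_one_nonneg hσ h1 s)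
    · rw [(hth top).1 hκ, mul_one]
      exact mul_pos (E.pL_pos top) (by linarith)
  · by_cases hall : ∀ s, σ s = 1
    · exact .inr (acceptProb_of_forall_eq_one E.sum_pH hall)
    push Not at hall
    obtain ⟨s₀, hs₀⟩ := hall
    left
    rw [← sub_pos, E.acceptProb_pH_sub_pL]
    refine sum_pos' (fun s _ => ?_) ⟨s₀, mem_univ _, ?_⟩
    · exact mul_assoc (pL s) _ _ ▸
        mul_nonneg (E.pL_pos s).le (hth.one_sub_mul_one_sub_nonneg hσ h1.le s)
    · have hlt : lr pL pH s₀ ≤ κ := not_lt.1 fun h => hs₀ ((hth s₀).1 h)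
      exact mul_pos (mul_pos (E.pL_pos s₀) (sub_pos.2 ((hσ s₀).2.lt_of_ne hs₀)))
        (by linarith)

end IsThreshold

lemma isThreshold_acceptAbove (pL pH : Fin m → ℝ) (l : ℝ) :
    IsThreshold pL pH (acceptAbove pL pH l) l :=
  fun _ => ⟨fun h => if_pos h, fun h => if_neg (not_lt.2 h.le)⟩

lemma surplus_nonneg (E : BoundedLR pL pH top) (hρ : ρ ∈ Set.Ioo (0:ℝ) 1)
    (hc : c ∈ Set.Ioo (0:ℝ) 1) (hn : n ≠ 0) (he : IsEquilibrium ρ c n pL pH σ) :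
    0 ≤ surplus ρ c n pL pH σ := by
  obtain ⟨hσ, hth⟩ := (isEquilibrium_iff E hρ hc hn).1 he
  have := visitSum_pos E.pH_nonneg E.sum_pH hσ hn
  have := hρ.1
  have := sub_pos.2 hc.2
  rw [surplus_eq_sum E hρ hc hn hσ]
  refine mul_nonneg (by positivity) (sum_nonneg fun s _ => ?_)
  rw [mul_assoc]
  exact mul_nonneg (E.pL_pos s).le (hth.mul_sub_nonneg hσ s)

lemma surplus_nonpos (E : BoundedLR pL pH top) (hρ : ρ ∈ Set.Ioo (0:ℝ) 1)
    (hc : c ∈ Set.Ioo (0:ℝ) 1) (hn : n ≠ 0) (hσ : IsStrategy σ)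
    (h : lr pL pH top ≤ cutoff ρ c n pL pH σ) : surplus ρ c n pL pH σ ≤ 0 := by
  have := visitSum_pos E.pH_nonneg E.sum_pH hσ hn
  have := hρ.1
  have := sub_pos.2 hc.2
  rw [surplus_eq_sum E hρ hc hn hσ]
  exact mul_nonpos_of_nonneg_of_nonpos (by positivity) (sum_nonpos fun s _ =>
    mul_nonpos_of_nonneg_of_nonpos (mul_nonneg (E.pL_pos s).le (hσ s).1)
      (by linarith [E.lr_le_top s]))

/-- If `a_L < a_H` then `V_L a_L = 1 - r_Lⁿ < 1 - r_Hⁿ = V_H a_H ≤ lr top · V_H a_L`, and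
`c (1 - ρ) ≤ (1 - c) ρ`; if `a_L = a_H` then `V_L = V_H` and `hgain` is the claim. -/
lemma cutoff_lt_lr_top (E : BoundedLR pL pH top) (hρ : ρ ∈ Set.Ioo (0:ℝ) 1)
    (hc : c ∈ Set.Ioo (0:ℝ) 1) (hcρ : c ≤ ρ)
    (hgain : c * (1 - ρ) < (1 - c) * ρ * lr pL pH top) (hn : n ≠ 0) (hσ : IsStrategy σ)
    {κ : ℝ} (hth : IsThreshold pL pH σ κ) : cutoff ρ c n pL pH σ < lr pL pH top := by
  have hH := visitSum_pos E.pH_nonneg E.sum_pH hσ hn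
  have hL := visitSum_pos (fun s => (E.pL_pos s).le) E.sum_pL hσ hn
  obtain ⟨hρ₀, hρ₁⟩ := hρ
  obtain ⟨hc₀, hc₁⟩ := hc
  have hα : 0 < (1 - c) * ρ := mul_pos (sub_pos.2 hc₁) hρ₀
  have hβα : c * (1 - ρ) ≤ (1 - c) * ρ := by linarith
  rw [cutoff, div_lt_iff₀ (mul_pos hα hH)]
  rcases (hth.acceptProb_pL_le E hσ).eq_or_lt with heq | hlt
  · have : visitSum n pL σ = visitSum n pH σ := by simp only [visitSum, rej_eq, heq]
    rw [this]
    nlinarith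
  · have hpow : rej pH σ ^ n < rej pL σ ^ n :=
      pow_lt_pow_left₀ (by rw [rej_eq, rej_eq]; linarith) (rej_nonneg E.pH_nonneg E.sum_pH hσ) hn
    have hL' := visitSum_mul_acceptProb n pL σ
    have hH' := visitSum_mul_acceptProb n pH σ
    have hle := E.acceptProb_pH_le hσ
    have haL : 0 < acceptProb pL σ := by
      nlinarith [acceptProb_nonneg (fun s => (E.pL_pos s).le) hσ, E.one_le_lr_top]
    have hV : visitSum n pL σ < lr pL pH top * visitSum n pH σ := by
      refine lt_of_mul_lt_mul_right ?_ haL.le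
      nlinarith
    nlinarith

lemma cutoff_le_cutoff (hρ : ρ ∈ Set.Ioo (0:ℝ) 1) (hc : c ∈ Set.Ioo (0:ℝ) 1) {n' : ℕ}
    {σ' : Fin m → ℝ} (hH : 0 < visitSum n pH σ) (hH' : 0 < visitSum n' pH σ')
    (h : visitSum n pL σ * visitSum n' pH σ' ≤ visitSum n' pL σ' * visitSum n pH σ) :
    cutoff ρ c n pL pH σ ≤ cutoff ρ c n' pL pH σ' := by
  have hα : 0 < (1 - c) * ρ := mul_pos (sub_pos.2 hc.2) hρ.1
  have hβ : 0 < c * (1 - ρ) := mul_pos hc.1 (sub_pos.2 hρ.2)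
  rw [cutoff, cutoff, div_le_div_iff₀ (mul_pos hα hH) (mul_pos hα hH')]
  calc c * (1 - ρ) * visitSum n pL σ * ((1 - c) * ρ * visitSum n' pH σ')
      = c * (1 - ρ) * ((1 - c) * ρ) * (visitSum n pL σ * visitSum n' pH σ') := by ring
    _ ≤ c * (1 - ρ) * ((1 - c) * ρ) * (visitSum n' pL σ' * visitSum n pH σ) := by gcongr
    _ = c * (1 - ρ) * visitSum n' pL σ' * ((1 - c) * ρ * visitSum n pH σ) := by ring

lemma acceptAbove_le {l : ℝ} (hth : IsThreshold pL pH σ l) (hσ : IsStrategy σ) (s : Fin m) :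
    acceptAbove pL pH l s ≤ σ s := by
  unfold acceptAbove
  split_ifs with h
  · exact ((hth s).1 h).ge
  · exact (hσ s).1

/-- `σ` and `acceptAbove (lr t₀)` differ only on the class `lr = lr t₀`, and the latter has
`a_H - lr t₀ · a_L ≥ pL top (lr top - lr t₀)`, so `geom_sum_one_sub_mul_le` applies. -/
lemma cutoff_le_cutoff_acceptAbove (E : BoundedLR pL pH top) (hρ : ρ ∈ Set.Ioo (0:ℝ) 1)
    (hc : c ∈ Set.Ioo (0:ℝ) 1) (hN : ManyBuyers n pL pH top) {t₀ : Fin m}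
    (ht₀ : lr pL pH t₀ < lr pL pH top) (hσ : IsStrategy σ)
    (hth : IsThreshold pL pH σ (lr pL pH t₀)) :
    cutoff ρ c n pL pH σ ≤ cutoff ρ c n pL pH (acceptAbove pL pH (lr pL pH t₀)) := by
  set l := lr pL pH t₀
  set σ₀ := acceptAbove pL pH l
  have hσ₀ : IsStrategy σ₀ := isStrategy_acceptAbove pL pH l
  have hth₀ : IsThreshold pL pH σ₀ l := isThreshold_acceptAbove pL pH l
  have htop₀ : σ₀ top = 1 := (hth₀ top).1 ht₀
  have hpL : ∀ s, 0 ≤ pL s := fun s => (E.pL_pos s).le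
  have hrel : acceptProb pH σ - acceptProb pH σ₀ = l * (acceptProb pL σ - acceptProb pL σ₀) := by
    have hsame : ∑ s, pL s * σ s * (lr pL pH s - l) = ∑ s, pL s * σ₀ s * (lr pL pH s - l) :=
      sum_congr rfl fun s _ => by
        rcases lt_trichotomy (lr pL pH s) l with h | h | h
        · rw [(hth s).2 h, (hth₀ s).2 h]
        · rw [h, sub_self, mul_zero, mul_zero]
        · rw [(hth s).1 h, (hth₀ s).1 h]
    linarith [E.acceptProb_pH_sub l σ, E.acceptProb_pH_sub l σ₀]
  have hgap : pL top * (lr pL pH top - l) ≤ acceptProb pH σ₀ - l * acceptProb pL σ₀ := by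
    rw [E.acceptProb_pH_sub]
    calc pL top * (lr pL pH top - l) = pL top * σ₀ top * (lr pL pH top - l) := by
          rw [htop₀, mul_one]
      _ ≤ ∑ s, pL s * σ₀ s * (lr pL pH s - l) :=
          single_le_sum (f := fun s => pL s * σ₀ s * (lr pL pH s - l)) (fun s _ =>
            mul_assoc (pL s) _ _ ▸ mul_nonneg (hpL s) (hth₀.mul_sub_nonneg hσ₀ s)) (mem_univ top)
  rcases Nat.eq_zero_or_pos n with rfl | hn
  · simp [cutoff, visitSum]
  refine cutoff_le_cutoff hρ hc (visitSum_pos E.pH_nonneg E.sum_pH hσ hn.ne')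
    (visitSum_pos E.pH_nonneg E.sum_pH hσ₀ hn.ne') ?_
  have hM := E.pL_pos top
  refine geom_sum_one_sub_mul_le hM (le_acceptProb hpL hσ₀ htop₀)
    (acceptProb_mono hpL (acceptAbove_le hth hσ)) (acceptProb_le_one hpL E.sum_pL hσ)
    (E.pL_top_le_acceptProb_pH hσ₀ htop₀) (acceptProb_mono E.pH_nonneg (acceptAbove_le hth hσ))
    (acceptProb_le_one E.pH_nonneg E.sum_pH hσ) hrel ?_
  calc (n : ℝ) * (1 - pL top) ^ (n - 1) ≤ pL top ^ 3 * (lr pL pH top - l) := hN t₀ ht₀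
    _ = pL top ^ 2 * (pL top * (lr pL pH top - l)) := by ring
    _ ≤ _ := mul_le_mul_of_nonneg_left hgap (by positivity)

/-- Climbing through the classes above `lr t₀` while the cutoff stays above the current one
must stop at an equilibrium: take the highest class where it does. -/
lemma exists_isEquilibrium_acceptAbove (E : BoundedLR pL pH top) (hρ : ρ ∈ Set.Ioo (0:ℝ) 1)
    (hc : c ∈ Set.Ioo (0:ℝ) 1) (hcρ : c ≤ ρ)
    (hgain : c * (1 - ρ) < (1 - c) * ρ * lr pL pH top) (hn : n ≠ 0)
    (hN : ManyBuyers n pL pH top) {t₀ : Fin m} (ht₀ : lr pL pH t₀ < lr pL pH top)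
    (h₀ : lr pL pH t₀ ≤ cutoff ρ c n pL pH (acceptAbove pL pH (lr pL pH t₀))) :
    ∃ t, lr pL pH t₀ ≤ lr pL pH t ∧ IsEquilibrium ρ c n pL pH (acceptAbove pL pH (lr pL pH t)) := by
  classical
  obtain ⟨t, ht, hmax⟩ := (univ.filter fun t => lr pL pH t₀ ≤ lr pL pH t ∧
      lr pL pH t < lr pL pH top ∧ lr pL pH t ≤ cutoff ρ c n pL pH (acceptAbove pL pH (lr pL pH t))
    ).exists_max_image (lr pL pH) ⟨t₀, by simp [ht₀, h₀]⟩
  simp only [mem_filter, mem_univ, true_and] at ht hmax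
  set τ := acceptAbove pL pH (lr pL pH t)
  have hτ := isStrategy_acceptAbove pL pH (lr pL pH t)
  refine ⟨t, ht.1, (isEquilibrium_iff E hρ hc hn).2 ⟨hτ, fun s =>
    ⟨fun h => if_pos (ht.2.2.trans_lt h), fun hs => ?_⟩⟩⟩
  by_contra hs₀
  have hts : lr pL pH t < lr pL pH s := not_le.1 fun h => hs₀ (if_neg (not_lt.2 h))
  obtain ⟨t', ht', hmin⟩ := (univ.filter fun u => lr pL pH t < lr pL pH u).exists_min_image
    (lr pL pH) ⟨s, by simp [hts]⟩
  simp only [mem_filter, mem_univ, true_and] at ht' hmin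
  have hκ := cutoff_lt_lr_top E hρ hc hcρ hgain hn hτ (isThreshold_acceptAbove _ _ _)
  have hth' : IsThreshold pL pH τ (lr pL pH t') := fun u =>
    ⟨fun h => if_pos (ht'.trans h), fun h => if_neg fun h' => (hmin u h').not_gt h⟩
  have ht's := hmin s hts
  have hle := cutoff_le_cutoff_acceptAbove E hρ hc hN (by linarith) hτ hth'
  have := hmax t' ⟨by linarith, by linarith, by linarith⟩
  linarith

/-- A signal accepted with probability strictly between `0` and `1` lies exactly at the cutoff;
rejecting its whole class does not lower the cutoff below it, and the climb of
`exists_isEquilibrium_acceptAbove` then gives an equilibrium rejecting it. -/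
lemma eq_zero_or_eq_one_of_mostSelective (E : BoundedLR pL pH top) (hρ : ρ ∈ Set.Ioo (0:ℝ) 1)
    (hc : c ∈ Set.Ioo (0:ℝ) 1) (hcρ : c ≤ ρ)
    (hgain : c * (1 - ρ) < (1 - c) * ρ * lr pL pH top) (hn : n ≠ 0)
    (hN : ManyBuyers n pL pH top) (hms : MostSelective ρ c n pL pH σ) (s : Fin m) :
    σ s = 0 ∨ σ s = 1 := by
  by_contra! h
  obtain ⟨he, hmin⟩ := hms
  obtain ⟨hσ, hth⟩ := (isEquilibrium_iff E hρ hc hn).1 he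
  have hs : lr pL pH s = cutoff ρ c n pL pH σ :=
    le_antisymm (not_lt.1 fun h' => h.2 ((hth s).1 h')) (not_lt.1 fun h' => h.1 ((hth s).2 h'))
  have hκ := cutoff_lt_lr_top E hρ hc hcρ hgain hn hσ hth
  rw [← hs] at hth hκ
  obtain ⟨t, hst, ht⟩ := exists_isEquilibrium_acceptAbove E hρ hc hcρ hgain hn hN hκ
    (hs.le.trans (cutoff_le_cutoff_acceptAbove E hρ hc hN hκ hσ hth))
  have := hmin _ ht s
  rw [acceptAbove, if_neg (not_lt.2 hst)] at this
  exact h.1 (le_antisymm this (hσ s).1)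

lemma cutoff_le_cutoff_succ (E : BoundedLR pL pH top) (hρ : ρ ∈ Set.Ioo (0:ℝ) 1)
    (hc : c ∈ Set.Ioo (0:ℝ) 1) (hσ : IsStrategy σ)
    (hacc : acceptProb pL σ ≤ acceptProb pH σ) (n : ℕ) :
    cutoff ρ c n pL pH σ ≤ cutoff ρ c (n + 1) pL pH σ := by
  rcases Nat.eq_zero_or_pos n with rfl | hn
  · have := hc.1
    have := sub_pos.2 hρ.2
    have := hρ.1
    have := sub_pos.2 hc.2
    simp only [cutoff, visitSum, zero_add, range_zero, range_one, sum_empty, sum_singleton,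
      pow_zero, mul_zero, mul_one, div_zero]
    positivity
  exact cutoff_le_cutoff hρ hc (visitSum_pos E.pH_nonneg E.sum_pH hσ hn.ne')
    (visitSum_pos E.pH_nonneg E.sum_pH hσ n.succ_ne_zero)
    (geom_sum_mul_geom_sum_succ_le n (rej_nonneg E.pH_nonneg E.sum_pH hσ)
      (by rw [rej_eq, rej_eq]; linarith))

/-- The cutoff of a fixed strategy is monotone in `n`, so each of the two halves of the
threshold condition can switch at most once. -/
lemma eventually_isEquilibrium_or_not (E : BoundedLR pL pH top) (hρ : ρ ∈ Set.Ioo (0:ℝ) 1)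
    (hc : c ∈ Set.Ioo (0:ℝ) 1) (σ : Fin m → ℝ) :
    (∀ᶠ n in atTop, IsEquilibrium ρ c n pL pH σ) ∨
      ∀ᶠ n in atTop, ¬IsEquilibrium ρ c n pL pH σ := by
  by_cases hσ : IsStrategy σ ∧ acceptProb pL σ ≤ acceptProb pH σ
  · have hmono : Monotone fun n => cutoff ρ c n pL pH σ :=
      monotone_nat_of_le_succ (cutoff_le_cutoff_succ E hρ hc hσ.1 hσ.2)
    have hiff : ∀ᶠ n in atTop, (IsEquilibrium ρ c n pL pH σ ↔
        (∀ s, cutoff ρ c n pL pH σ < lr pL pH s → σ s = 1) ∧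
          ∀ s, lr pL pH s < cutoff ρ c n pL pH σ → σ s = 0) := by
      filter_upwards [eventually_ne_atTop 0] with n hn
      rw [isEquilibrium_iff E hρ hc hn, IsThreshold, forall_and, and_iff_right hσ.1]
    rcases eventually_and_or_eventually_not
        (P := fun n => ∀ s, cutoff ρ c n pL pH σ < lr pL pH s → σ s = 1)
        (Q := fun n => ∀ s, lr pL pH s < cutoff ρ c n pL pH σ → σ s = 0)
        (fun _ _ hab hP s h => hP s ((hmono hab).trans_lt h))
        (fun _ _ hab hQ s h => hQ s (h.trans_le (hmono hab))) with h | h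
    · exact .inl (by filter_upwards [h, hiff] with n h₁ h₂ using h₂.2 h₁)
    · exact .inr (by filter_upwards [h, hiff] with n h₁ h₂ using fun h₃ => h₁ (h₂.1 h₃))
  · refine .inr ?_
    filter_upwards [eventually_ne_atTop 0] with n hn he
    obtain ⟨hσ', hth⟩ := (isEquilibrium_iff E hρ hc hn).1 he
    exact hσ ⟨hσ', hth.acceptProb_pL_le E hσ'⟩

/-- Pure strategies are finitely many, so eventually each is an equilibrium for `n` iff it is
for `n + 1`; two most selective equilibria that are both pure then bound each other. -/
lemma eventually_succ_eq_of_pure (E : BoundedLR pL pH top) (hρ : ρ ∈ Set.Ioo (0:ℝ) 1)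
    (hc : c ∈ Set.Ioo (0:ℝ) 1) {σs : ℕ → Fin m → ℝ}
    (hms : ∀ k, 1 ≤ k → MostSelective ρ c k pL pH (σs k))
    (hpure : ∀ᶠ k in atTop, ∀ s, σs k s = 0 ∨ σs k s = 1) :
    ∀ᶠ k in atTop, σs (k + 1) = σs k := by
  have hfin : (Set.univ.pi fun _ : Fin m => ({0, 1} : Set ℝ)).Finite :=
    Set.Finite.pi fun _ => Set.toFinite _
  have hstable : ∀ᶠ k in atTop, ∀ τ ∈ Set.univ.pi fun _ : Fin m => ({0, 1} : Set ℝ),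
      (IsEquilibrium ρ c k pL pH τ ↔ IsEquilibrium ρ c (k + 1) pL pH τ) := by
    refine (eventually_all_finite hfin).2 fun τ _ => ?_
    rcases eventually_isEquilibrium_or_not E hρ hc τ with h | h
    · filter_upwards [h, (tendsto_add_atTop_nat 1).eventually h] with k h₁ h₂
      exact iff_of_true h₁ h₂
    · filter_upwards [h, (tendsto_add_atTop_nat 1).eventually h] with k h₁ h₂
      exact iff_of_false h₁ h₂
  filter_upwards [hstable, hpure, (tendsto_add_atTop_nat 1).eventually hpure,
    eventually_ge_atTop 1] with k hst hk hk' hk₁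
  funext s
  exact le_antisymm ((hms (k + 1) (by omega)).2 _ ((hst _ fun s _ => hk s).1 (hms k hk₁).1) s)
    ((hms k hk₁).2 _ ((hst _ fun s _ => hk' s).2 (hms (k + 1) (by omega)).1) s)

lemma eventually_manyBuyers (E : BoundedLR pL pH top) : ∀ᶠ n in atTop, ManyBuyers n pL pH top := by
  have hM := E.pL_pos top
  have hM₁ := E.pL_le_one top
  have ht := tendsto_nat_mul_pow_pred (γ := 1 - pL top) (by linarith) (by linarith)
  refine eventually_all.2 fun s => ?_
  by_cases hs : lr pL pH s < lr pL pH top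
  · have : 0 < pL top ^ 3 * (lr pL pH top - lr pL pH s) := by
      have := sub_pos.2 hs
      positivity
    filter_upwards [ht.eventually_lt_const this] with n hn _ using hn.le
  · exact Eventually.of_forall fun _ h => absurd h hs

lemma eventually_surplus_succ_le (E : BoundedLR pL pH top) (hρ : ρ ∈ Set.Ioo (0:ℝ) 1)
    (hc : c ∈ Set.Ioo (0:ℝ) 1) (hσ : IsStrategy σ) (hpos : 0 < acceptProb pL σ)
    (hacc : acceptProb pL σ < acceptProb pH σ ∨ acceptProb pH σ = 1) :
    ∀ᶠ n in atTop, surplus ρ c (n + 1) pL pH σ ≤ surplus ρ c n pL pH σ := by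
  have hdiff : ∀ n, surplus ρ c n pL pH σ - surplus ρ c (n + 1) pL pH σ =
      c * (1 - ρ) * acceptProb pL σ * rej pL σ ^ n -
        (1 - c) * ρ * acceptProb pH σ * rej pH σ ^ n := fun n => by
    simp only [surplus, pow_succ, rej_eq]
    ring
  have hβ : 0 < c * (1 - ρ) := mul_pos hc.1 (sub_pos.2 hρ.2)
  have hL := rej_nonneg (fun s => (E.pL_pos s).le) E.sum_pL hσ
  rcases hacc with hlt | h₁
  · filter_upwards [eventually_mul_pow_le_mul_pow ((1 - c) * ρ * acceptProb pH σ)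
      (rej_nonneg E.pH_nonneg E.sum_pH hσ)
      (show rej pH σ < rej pL σ by rw [rej_eq, rej_eq]; linarith) (mul_pos hβ hpos)] with n hn
    linarith [hdiff n]
  · filter_upwards [eventually_ne_atTop 0] with n hn
    have : 0 ≤ c * (1 - ρ) * acceptProb pL σ * rej pL σ ^ n := by positivity
    have := hdiff n
    rw [rej_eq pH σ, h₁, sub_self, zero_pow hn, mul_zero, sub_zero] at this
    linarith

lemma tendsto_rej_pow {p : Fin m → ℝ} (hp : ∀ s, 0 ≤ p s) (hp₁ : ∑ s, p s = 1) {M : ℝ}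
    (hM : 0 < M) {σs : ℕ → Fin m → ℝ}
    (hσs : ∀ᶠ n in atTop, IsStrategy (σs n) ∧ M ≤ acceptProb p (σs n)) :
    Tendsto (fun n => rej p (σs n) ^ n) atTop (𝓝 0) := by
  have hM₁ : M ≤ 1 := by
    obtain ⟨n, hn⟩ := hσs.exists
    exact hn.2.trans (acceptProb_le_one hp hp₁ hn.1)
  refine squeeze_zero' ?_ ?_ (tendsto_pow_atTop_nhds_zero_of_lt_one (sub_nonneg.2 hM₁)
    (sub_lt_self 1 hM))
  · filter_upwards [hσs] with n hn using pow_nonneg (rej_nonneg hp hp₁ hn.1) n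
  · filter_upwards [hσs] with n hn
    exact pow_le_pow_left₀ (rej_nonneg hp hp₁ hn.1) (by rw [rej_eq]; linarith [hn.2]) n

lemma top_eq_one_of_isEquilibrium (E : BoundedLR pL pH top) (hρ : ρ ∈ Set.Ioo (0:ℝ) 1)
    (hc : c ∈ Set.Ioo (0:ℝ) 1) (hcρ : c ≤ ρ)
    (hgain : c * (1 - ρ) < (1 - c) * ρ * lr pL pH top) (hn : n ≠ 0)
    (he : IsEquilibrium ρ c n pL pH σ) : σ top = 1 := by
  obtain ⟨hσ, hth⟩ := (isEquilibrium_iff E hρ hc hn).1 he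
  exact (hth top).1 (cutoff_lt_lr_top E hρ hc hcρ hgain hn hσ hth)

/-- If `ρ < c`, an equilibrium accepting the top signal is eventually loss-making; otherwise
its cutoff is at least `lr top`, and every term of `surplus_eq_sum` is nonpositive. -/
lemma eventually_surplus_eq_zero (E : BoundedLR pL pH top) (hρ : ρ ∈ Set.Ioo (0:ℝ) 1)
    (hc : c ∈ Set.Ioo (0:ℝ) 1) (hρc : ρ < c) :
    ∀ᶠ n in atTop, ∀ σ, IsEquilibrium ρ c n pL pH σ → surplus ρ c n pL pH σ = 0 := by
  have hM := E.pL_pos top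
  have hM₁ := E.pL_le_one top
  have hα : 0 < (1 - c) * ρ := mul_pos (sub_pos.2 hc.2) hρ.1
  have hβ : 0 < c * (1 - ρ) := mul_pos hc.1 (sub_pos.2 hρ.2)
  have hlim : Tendsto (fun n : ℕ => (1 - c) * ρ - c * (1 - ρ) * (1 - (1 - pL top) ^ n)) atTop
      (𝓝 ((1 - c) * ρ - c * (1 - ρ) * (1 - 0))) :=
    tendsto_const_nhds.sub (tendsto_const_nhds.mul (tendsto_const_nhds.sub
      (tendsto_pow_atTop_nhds_zero_of_lt_one (by linarith) (by linarith))))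
  have hneg : (1 - c) * ρ - c * (1 - ρ) * (1 - 0) < 0 := by linarith
  filter_upwards [hlim.eventually_lt_const hneg, eventually_ne_atTop 0] with n hsmall hn σ he
  obtain ⟨hσ, hth⟩ := (isEquilibrium_iff E hρ hc hn).1 he
  refine le_antisymm ?_ (surplus_nonneg E hρ hc hn he)
  rcases le_or_gt (lr pL pH top) (cutoff ρ c n pL pH σ) with h | h
  · exact surplus_nonpos E hρ hc hn hσ h
  have hacc := le_acceptProb (fun s => (E.pL_pos s).le) hσ ((hth top).1 h)
  have hL : rej pL σ ^ n ≤ (1 - pL top) ^ n :=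
    pow_le_pow_left₀ (rej_nonneg (fun s => (E.pL_pos s).le) E.sum_pL hσ)
      (by rw [rej_eq]; linarith) n
  have hH : 0 ≤ rej pH σ ^ n := pow_nonneg (rej_nonneg E.pH_nonneg E.sum_pH hσ) n
  have := mul_le_mul_of_nonneg_left hL hβ.le
  have := mul_nonneg hα.le hH
  unfold surplus
  linarith

lemma eq_and_pH_eq_of_mul_lr_top_le (E : BoundedLR pL pH top) (hρ : ρ ∈ Set.Ioo (0:ℝ) 1)
    (hc : c ∈ Set.Ioo (0:ℝ) 1) (hcρ : c ≤ ρ)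
    (hgain : (1 - c) * ρ * lr pL pH top ≤ c * (1 - ρ)) : ρ = c ∧ pH = pL := by
  have hα : 0 < (1 - c) * ρ := mul_pos (sub_pos.2 hc.2) hρ.1
  have h₁ := mul_le_mul_of_nonneg_left E.one_le_lr_top hα.le
  have hlr : lr pL pH top ≤ 1 := le_of_mul_le_mul_left (by linarith) hα
  have hle : ∀ s ∈ univ, pH s ≤ pL s := fun s _ => by
    rw [E.pH_eq s]
    exact mul_le_of_le_one_left (E.pL_pos s).le ((E.lr_le_top s).trans hlr)
  exact ⟨by linarith, funext fun s =>
    (sum_eq_sum_iff_of_le hle).1 (E.sum_pH.trans E.sum_pL.symm) s (mem_univ s)⟩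

lemma eventually_surplus_mostSelective_succ_le (E : BoundedLR pL pH top)
    (hρ : ρ ∈ Set.Ioo (0:ℝ) 1) (hc : c ∈ Set.Ioo (0:ℝ) 1) (hcρ : c ≤ ρ)
    (hgain : c * (1 - ρ) < (1 - c) * ρ * lr pL pH top) {σs : ℕ → Fin m → ℝ}
    (hms : ∀ k, 1 ≤ k → MostSelective ρ c k pL pH (σs k)) :
    ∀ᶠ k in atTop, surplus ρ c (k + 1) pL pH (σs (k + 1)) ≤ surplus ρ c k pL pH (σs k) := by
  have hpure : ∀ᶠ k in atTop, ∀ s, σs k s = 0 ∨ σs k s = 1 := by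
    filter_upwards [eventually_manyBuyers E, eventually_ge_atTop 1] with k hN hk
    exact eq_zero_or_eq_one_of_mostSelective E hρ hc hcρ hgain (by omega) hN (hms k hk)
  obtain ⟨N, hN⟩ := eventually_atTop.1
    ((eventually_succ_eq_of_pure E hρ hc hms hpure).and (eventually_ge_atTop 1))
  have hconst : ∀ k, N ≤ k → σs k = σs N := fun k hk => by
    induction k, hk using Nat.le_induction with
    | base => rfl
    | succ k hk ih => rw [(hN k hk).1, ih]
  have hN₁ : N ≠ 0 := by have := (hN N le_rfl).2; omega
  obtain ⟨hσ, hth⟩ := (isEquilibrium_iff E hρ hc hN₁).1 (hms N (by omega)).1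
  have hκ := cutoff_lt_lr_top E hρ hc hcρ hgain hN₁ hσ hth
  have hpos := (E.pL_pos top).trans_le
    (le_acceptProb (fun s => (E.pL_pos s).le) hσ ((hth top).1 hκ))
  filter_upwards [eventually_surplus_succ_le E hρ hc hσ hpos (hth.acceptProb_pL_lt_or E hσ hκ),
    eventually_ge_atTop N] with k hk hkN
  rwa [hconst k hkN, hconst (k + 1) (by omega)]

lemma tendsto_surplus (E : BoundedLR pL pH top) {σs : ℕ → Fin m → ℝ}
    (hσs : ∀ᶠ n in atTop, IsStrategy (σs n) ∧ σs n top = 1) :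
    Tendsto (fun n => surplus ρ c n pL pH (σs n)) atTop (𝓝 (ρ - c)) := by
  have hL := tendsto_rej_pow (fun s => (E.pL_pos s).le) E.sum_pL (E.pL_pos top)
    (hσs.mono fun _ h => ⟨h.1, le_acceptProb (fun s => (E.pL_pos s).le) h.1 h.2⟩)
  have hH := tendsto_rej_pow E.pH_nonneg E.sum_pH (E.pL_pos top)
    (hσs.mono fun _ h => ⟨h.1, E.pL_top_le_acceptProb_pH h.1 h.2⟩)
  rw [show ρ - c = (1 - c) * ρ * (1 - 0) - c * (1 - ρ) * (1 - 0) by ring]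
  exact ((hH.const_sub 1).const_mul _).sub ((hL.const_sub 1).const_mul _)

end Market

open Market

/-- if no outcome fully reveals High quality, surplus in the most selective
equilibrium is eventually weakly decreasing in the number of buyers and converges to
the no-information benchmark `max{0, ρ - c}`. -/
theorem more_buyers_bounded_likelihood
    (ρ c : ℝ) (hρ : ρ ∈ Set.Ioo (0:ℝ) 1) (hc : c ∈ Set.Ioo (0:ℝ) 1)
    (m : ℕ) (hm : 1 ≤ m)
    (pL pH : Fin m → ℝ) (hE : IsExperiment pL pH)
    (htop : 0 < pL ⟨m - 1, by omega⟩)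
    (σhat : ℕ → Fin m → ℝ)
    (hσ : ∀ k : ℕ, 1 ≤ k → MostSelective ρ c k pL pH (σhat k)) :
    (∃ N : ℕ, ∀ k : ℕ, N ≤ k →
      surplus ρ c (k + 1) pL pH (σhat (k + 1)) ≤ surplus ρ c k pL pH (σhat k)) ∧
    Tendsto (fun k : ℕ => surplus ρ c k pL pH (σhat k)) atTop (𝓝 (max 0 (ρ - c))) := by
  set top : Fin m := ⟨m - 1, by omega⟩
  have E : BoundedLR pL pH top :=
    .of_isExperiment hE (fun s => Fin.le_iff_val_le_val.2 (Nat.le_sub_one_of_lt s.isLt)) htop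
  have heq : ∀ᶠ k in atTop, IsEquilibrium ρ c k pL pH (σhat k) :=
    eventually_atTop.2 ⟨1, fun k hk => (hσ k hk).1⟩
  rcases lt_or_ge ρ c with hρc | hcρ
  · rw [max_eq_left (by linarith)]
    exact exists_succ_le_and_tendsto_of_eventually_eq_zero (by
      filter_upwards [eventually_surplus_eq_zero E hρ hc hρc, heq] with k h hk using h _ hk)
  rcases le_or_gt ((1 - c) * ρ * lr pL pH top) (c * (1 - ρ)) with hgain | hgain
  · obtain ⟨hρc, hpHL⟩ := eq_and_pH_eq_of_mul_lr_top_le E hρ hc hcρ hgain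
    subst hρc hpHL
    rw [sub_self, max_self]
    exact exists_succ_le_and_tendsto_of_eventually_eq_zero
      (u := fun k => surplus ρ ρ k pH pH (σhat k)) (.of_forall fun k => by unfold surplus; ring)
  rw [max_eq_right (sub_nonneg.2 hcρ)]
  refine ⟨eventually_atTop.1 (eventually_surplus_mostSelective_succ_le E hρ hc hcρ hgain hσ),
    tendsto_surplus E ?_⟩
  filter_upwards [heq, eventually_ne_atTop 0] with k hk hk₀
  exact ⟨hk.1, top_eq_one_of_isEquilibrium E hρ hc hcρ hgain hk₀ hk⟩
end
end
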